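/- arXiv:1511.07396 — 7 statements merged into one kernel-verified Lean document; each statement's English description precedes it below -/
import Mathlib

section
/- Let τ̄ = max(τ₁, τ₂) and assume τ̄ ≥ 0. For every β ∈ (0,1], γ > 0 and every pair of points y, y' ∈ F_{β,γ}(D_{β,γ}) such that the segment joining y and y' is entirely contained in F_{β,γ}(D_{β,γ}), one has (ψ_{β,γ}(y) − ψ_{β,γ}(y'))·(y − y') ≤ τ̄ ‖y − y'‖₂²; in other words, ψ_{β,γ} is τ̄ non-expansive on each convex component of the open cone F_{β,γ}(D_{β,γ}). -/
open Real Set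

/-- The competitive Lotka–Volterra push-forward vector field
`ψ_{β,γ} = (J_{F_{β,γ}} b) ∘ F_{β,γ}⁻¹` on `(0,∞)²`. -/
noncomputable def psiLV (τ₁ τ₂ a b c d β γ : ℝ) (y : ℝ × ℝ) : ℝ × ℝ :=
  (β * y.1 * (τ₁ - a * y.1 ^ (1 / β) - c * γ ^ (-(1 / β)) * y.2 ^ (1 / β)),
   β * y.2 * (τ₂ - b * γ ^ (-(1 / β)) * y.2 ^ (1 / β) - d * y.1 ^ (1 / β)))

/-- The transformation `F_{β,γ}(x₁,x₂) = (x₁^β, γ x₂^β)`. -/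
noncomputable def FLV (β γ : ℝ) (x : ℝ × ℝ) : ℝ × ℝ := (x.1 ^ β, γ * x.2 ^ β)

/-- The open cone `D_{β,γ}`. -/
noncomputable def DLV (a b c d β γ : ℝ) : Set (ℝ × ℝ) :=
  {x | 0 < x.1 ∧ 0 < x.2 ∧
    0 < 4 * β * (1 + β) * (a * d * x.1 ^ 2 + b * c * x.2 ^ 2)
        + (4 * a * b * (1 + β) ^ 2 + 4 * (β ^ 2 - 1) * c * d) * (x.1 * x.2)
        - (c * γ⁻¹ * x.1 ^ β * x.2 ^ (1 - β) - d * γ * x.1 ^ (1 - β) * x.2 ^ β) ^ 2}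

/-- Euclidean scalar product on `ℝ²`. -/
def dot2 (u v : ℝ × ℝ) : ℝ := u.1 * v.1 + u.2 * v.2

/-- Euclidean norm on `ℝ²`. -/
noncomputable def nrm2 (u : ℝ × ℝ) : ℝ := Real.sqrt (u.1 ^ 2 + u.2 ^ 2)

/-!
Write `v = y - y'`. Along the segment, the derivative of `t ↦ ψ(y' + t v) · v` is the quadratic
form `vᵀ Jψ(z) v` of the Jacobian, so by the mean value theorem it suffices to bound this form by
`τ̄ ‖v‖²` at every point `z = F(x)` with `x ∈ D`. Pulled back to `x`, the form equals
`β τ₁ v₁² + β τ₂ v₂²` minus a binary quadratic form `P v₁² + Q v₂² + s v₁ v₂` with `P ≥ 0`, whose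
discriminant `s² - 4PQ` is negative precisely because `x ∈ D`. Finally `β τᵢ ≤ τ̄` because
`0 < β ≤ 1` and `τ̄ ≥ 0`.
-/

/-- The quadratic form `v ↦ vᵀ Jψ(z) v` of the Jacobian of `ψ_{β,γ}` at `z`. -/
noncomputable def psiLVJacQuad (τ₁ τ₂ a b c d β γ : ℝ) (z v : ℝ × ℝ) : ℝ :=
  (β * τ₁ - a * (1 + β) * z.1 ^ (1 / β) - c * β * γ ^ (-(1 / β)) * z.2 ^ (1 / β)) * v.1 ^ 2
  + (β * τ₂ - b * (1 + β) * γ ^ (-(1 / β)) * z.2 ^ (1 / β) - d * β * z.1 ^ (1 / β)) * v.2 ^ 2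
  - (c * γ ^ (-(1 / β)) * z.1 * z.2 ^ (1 / β - 1) + d * z.2 * z.1 ^ (1 / β - 1)) * (v.1 * v.2)

lemma quadratic_nonneg_of_sq_lt {P Q s : ℝ} (hP : 0 ≤ P) (hdisc : s ^ 2 < 4 * P * Q)
    (v₁ v₂ : ℝ) : 0 ≤ P * v₁ ^ 2 + Q * v₂ ^ 2 + s * (v₁ * v₂) := by
  have hP : 0 < P := hP.lt_of_ne <| by
    rintro rfl
    nlinarith [sq_nonneg s]
  refine nonneg_of_mul_nonneg_right (a := 4 * P) ?_ (by positivity)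
  have hsq : 4 * P * (P * v₁ ^ 2 + Q * v₂ ^ 2 + s * (v₁ * v₂))
      = (2 * P * v₁ + s * v₂) ^ 2 + (4 * P * Q - s ^ 2) * v₂ ^ 2 := by ring
  rw [hsq]
  have : 0 ≤ 4 * P * Q - s ^ 2 := by linarith
  positivity

lemma HasDerivAt.mul_sub_rpow {u x : ℝ → ℝ} {u' x' t : ℝ} (p τ A B : ℝ)
    (hu : HasDerivAt u u' t) (hx : HasDerivAt x x' t) (hu0 : u t ≠ 0) (hx0 : x t ≠ 0) :
    HasDerivAt (fun s => u s * (τ - A * u s ^ p - B * x s ^ p))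
      (u' * (τ - A * u t ^ p - B * x t ^ p)
        - u t * (A * (u' * p * u t ^ (p - 1)) + B * (x' * p * x t ^ (p - 1)))) t := by
  refine (hu.mul ((((hu.rpow_const (Or.inl hu0)).const_mul A).const_sub τ).sub
    ((hx.rpow_const (Or.inl hx0)).const_mul B))).congr_deriv ?_
  simp only [Pi.sub_apply]
  ring

lemma hasDerivAt_dot2_psiLV_line (τ₁ τ₂ a b c d : ℝ) {β : ℝ} (γ : ℝ) (hβ : β ≠ 0)
    {w v : ℝ × ℝ} {t : ℝ} (hz : 0 < (w + t • v).1 ∧ 0 < (w + t • v).2) :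
    HasDerivAt (fun s : ℝ => dot2 (psiLV τ₁ τ₂ a b c d β γ (w + s • v)) v)
      (psiLVJacQuad τ₁ τ₂ a b c d β γ (w + t • v) v) t := by
  simp only [Prod.fst_add, Prod.snd_add, Prod.smul_fst, Prod.smul_snd, smul_eq_mul] at hz
  have haffine (w₀ v₀ : ℝ) : HasDerivAt (fun s : ℝ => w₀ + s * v₀) v₀ t := by
    simpa using ((hasDerivAt_id t).mul_const v₀).const_add w₀
  have h₁ := ((haffine w.1 v.1).mul_sub_rpow (1 / β) τ₁ a (c * γ ^ (-(1 / β)))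
    (haffine w.2 v.2) hz.1.ne' hz.2.ne').const_mul β
  have h₂ := ((haffine w.2 v.2).mul_sub_rpow (1 / β) τ₂ (b * γ ^ (-(1 / β))) d
    (haffine w.1 v.1) hz.2.ne' hz.1.ne').const_mul β
  refine (((h₁.mul_const v.1).add (h₂.mul_const v.2)).congr_of_eventuallyEq
    (.of_forall fun s => ?_)).congr_deriv ?_
  · simp only [dot2, psiLV, Prod.fst_add, Prod.snd_add, Prod.smul_fst, Prod.smul_snd,
      smul_eq_mul, Pi.add_apply]
    ring
  · have hβp : β * (1 / β) = 1 := mul_one_div_cancel hβ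
    have hpow (u : ℝ) (hu : 0 < u) : u * u ^ (1 / β - 1) = u ^ (1 / β) := by
      rw [mul_comm, ← rpow_add_one hu.ne', sub_add_cancel]
    simp only [psiLVJacQuad, Prod.fst_add, Prod.snd_add, Prod.smul_fst, Prod.smul_snd,
      smul_eq_mul]
    rw [← hpow _ hz.1, ← hpow _ hz.2]
    linear_combination (-(a * v.1 ^ 2 * (w.1 + t * v.1) * (w.1 + t * v.1) ^ (1 / β - 1))
      - c * γ ^ (-(1 / β)) * (w.1 + t * v.1) * (w.2 + t * v.2) ^ (1 / β - 1) * v.1 * v.2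
      - b * γ ^ (-(1 / β)) * (w.2 + t * v.2) * (w.2 + t * v.2) ^ (1 / β - 1) * v.2 ^ 2
      - d * (w.2 + t * v.2) * (w.1 + t * v.1) ^ (1 / β - 1) * v.1 * v.2) * hβp

lemma pos_of_mem_image_FLV {a b c d β γ : ℝ} (hγ : 0 < γ) {z : ℝ × ℝ}
    (hz : z ∈ FLV β γ '' DLV a b c d β γ) : 0 < z.1 ∧ 0 < z.2 := by
  obtain ⟨x, ⟨hx₁, hx₂, -⟩, rfl⟩ := hz
  exact ⟨rpow_pos_of_pos hx₁ β, mul_pos hγ (rpow_pos_of_pos hx₂ β)⟩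

section PullBack

variable (τ₁ τ₂ a b c d : ℝ) {β γ : ℝ} {x : ℝ × ℝ}

lemma psiLVJacQuad_FLV (hβ : β ≠ 0) (hγ : 0 < γ) (hx₁ : 0 < x.1) (hx₂ : 0 < x.2)
    (v : ℝ × ℝ) :
    psiLVJacQuad τ₁ τ₂ a b c d β γ (FLV β γ x) v
      = β * τ₁ * v.1 ^ 2 + β * τ₂ * v.2 ^ 2
        - ((a * (1 + β) * x.1 + c * β * x.2) * v.1 ^ 2
          + (b * (1 + β) * x.2 + d * β * x.1) * v.2 ^ 2
          + (c * γ⁻¹ * x.1 ^ β * x.2 ^ (1 - β) + d * γ * x.1 ^ (1 - β) * x.2 ^ β)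
            * (v.1 * v.2)) := by
  have hexp : β * (1 / β - 1) = 1 - β := by field_simp
  have hinv (u : ℝ) (hu : 0 < u) : (u ^ β) ^ (1 / β) = u := by
    rw [← rpow_mul hu.le, mul_one_div_cancel hβ, rpow_one]
  have hγx₂ (q : ℝ) : (γ * x.2 ^ β) ^ q = γ ^ q * x.2 ^ (β * q) := by
    rw [mul_rpow hγ.le (rpow_nonneg hx₂.le β), rpow_mul hx₂.le]
  have hγ₁ : γ ^ (-(1 / β)) * γ ^ (1 / β) = 1 := by
    rw [← rpow_add hγ, neg_add_cancel, rpow_zero]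
  have hγ₂ : γ ^ (-(1 / β)) * γ ^ (1 / β - 1) = γ⁻¹ := by
    rw [← rpow_add hγ, show -(1 / β) + (1 / β - 1) = -1 by ring, rpow_neg_one]
  simp only [psiLVJacQuad, FLV]
  rw [hinv _ hx₁, hγx₂, hγx₂, mul_one_div_cancel hβ, rpow_one, hexp, ← rpow_mul hx₁.le, hexp]
  linear_combination (-(c * β * x.2 * v.1 ^ 2) - b * (1 + β) * x.2 * v.2 ^ 2) * hγ₁
    - c * x.1 ^ β * x.2 ^ (1 - β) * v.1 * v.2 * hγ₂

lemma sq_add_lt_of_mem_DLV (hγ : γ ≠ 0) (hx : x ∈ DLV a b c d β γ) :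
    (c * γ⁻¹ * x.1 ^ β * x.2 ^ (1 - β) + d * γ * x.1 ^ (1 - β) * x.2 ^ β) ^ 2
      < 4 * (a * (1 + β) * x.1 + c * β * x.2) * (b * (1 + β) * x.2 + d * β * x.1) := by
  obtain ⟨hx₁, hx₂, hD⟩ := hx
  have hsplit (u : ℝ) (hu : 0 < u) : u ^ β * u ^ (1 - β) = u := by
    rw [← rpow_add hu, add_sub_cancel, rpow_one]
  -- the two cross terms multiply to `c d x₁ x₂`, which turns the square of their sum into the
  -- square of their difference appearing in `D`
  have hprod : (c * γ⁻¹ * x.1 ^ β * x.2 ^ (1 - β)) * (d * γ * x.1 ^ (1 - β) * x.2 ^ β)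
      = c * d * (x.1 * x.2) := by
    calc _ = c * d * (γ⁻¹ * γ) * ((x.1 ^ β * x.1 ^ (1 - β)) * (x.2 ^ β * x.2 ^ (1 - β))) := by
          ring
      _ = c * d * (x.1 * x.2) := by rw [hsplit _ hx₁, hsplit _ hx₂, inv_mul_cancel₀ hγ, mul_one]
  linear_combination hD + 4 * hprod

lemma psiLVJacQuad_le_of_mem_image (ha : 0 ≤ a) (hc : 0 ≤ c) (hτ : 0 ≤ max τ₁ τ₂)
    (hβ : β ∈ Ioc (0 : ℝ) 1) (hγ : 0 < γ) {z : ℝ × ℝ} (hz : z ∈ FLV β γ '' DLV a b c d β γ)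
    (v : ℝ × ℝ) :
    psiLVJacQuad τ₁ τ₂ a b c d β γ z v ≤ max τ₁ τ₂ * (v.1 ^ 2 + v.2 ^ 2) := by
  obtain ⟨hβ₀, hβ₁⟩ := hβ
  obtain ⟨x, hx, rfl⟩ := hz
  obtain ⟨hx₁, hx₂, -⟩ := id hx
  rw [psiLVJacQuad_FLV τ₁ τ₂ a b c d hβ₀.ne' hγ hx₁ hx₂]
  have hform := quadratic_nonneg_of_sq_lt (by positivity)
    (sq_add_lt_of_mem_DLV a b c d hγ.ne' hx) v.1 v.2
  have hscale {τ : ℝ} (h : τ ≤ max τ₁ τ₂) : β * τ ≤ max τ₁ τ₂ :=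
    (mul_le_mul_of_nonneg_left h hβ₀.le).trans (mul_le_of_le_one_left hτ hβ₁)
  linear_combination hform + v.1 ^ 2 * hscale (le_max_left τ₁ τ₂)
    + v.2 ^ 2 * hscale (le_max_right τ₁ τ₂)

end PullBack

theorem stmt0_general (τ₁ τ₂ a b c d : ℝ) (ha : 0 ≤ a) (hc : 0 ≤ c)
    (hτ : 0 ≤ max τ₁ τ₂) (β γ : ℝ) (hβ : β ∈ Set.Ioc (0 : ℝ) 1) (hγ : 0 < γ)
    (y y' : ℝ × ℝ)
    (hseg : segment ℝ y y' ⊆ FLV β γ '' DLV a b c d β γ) :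
    dot2 (psiLV τ₁ τ₂ a b c d β γ y - psiLV τ₁ τ₂ a b c d β γ y') (y - y') ≤
      max τ₁ τ₂ * nrm2 (y - y') ^ 2 := by
  set v := y - y'
  have hline : ∀ t ∈ Icc (0 : ℝ) 1, y' + t • v ∈ FLV β γ '' DLV a b c d β γ := fun t ht =>
    hseg <| by rw [segment_symm, segment_eq_image']; exact ⟨t, ht, rfl⟩
  have hderiv (t : ℝ) (ht : t ∈ Icc (0 : ℝ) 1) :=
    hasDerivAt_dot2_psiLV_line τ₁ τ₂ a b c d γ hβ.1.ne' (pos_of_mem_image_FLV hγ (hline t ht))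
  obtain ⟨t, ht, hslope⟩ := exists_hasDerivAt_eq_slope _ _ one_pos
    (fun s hs => (hderiv s hs).continuousAt.continuousWithinAt)
    (fun s hs => hderiv s (Ioo_subset_Icc_self hs))
  calc dot2 (psiLV τ₁ τ₂ a b c d β γ y - psiLV τ₁ τ₂ a b c d β γ y') v
      = psiLVJacQuad τ₁ τ₂ a b c d β γ (y' + t • v) v := by
        rw [hslope, sub_zero, div_one, one_smul, zero_smul, add_zero, add_sub_cancel]
        simp only [dot2, Prod.fst_sub, Prod.snd_sub]
        ring
    _ ≤ max τ₁ τ₂ * (v.1 ^ 2 + v.2 ^ 2) := psiLVJacQuad_le_of_mem_image τ₁ τ₂ a b c d ha hc hτ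
        hβ hγ (hline t (Ioo_subset_Icc_self ht)) v
    _ = max τ₁ τ₂ * nrm2 v ^ 2 := by rw [nrm2, sq_sqrt (by positivity)]

/-- `ψ_{β,γ}` is `max(τ₁,τ₂)` non-expansive on each convex component of the open cone
`F_{β,γ}(D_{β,γ})`. -/
theorem stmt0 (τ₁ τ₂ a b c d : ℝ) (ha : 0 ≤ a) (hb : 0 ≤ b) (hc : 0 ≤ c) (hd : 0 ≤ d)
    (hτ : 0 ≤ max τ₁ τ₂) (β γ : ℝ) (hβ : β ∈ Set.Ioc (0 : ℝ) 1) (hγ : 0 < γ)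
    (y y' : ℝ × ℝ)
    (hy : y ∈ FLV β γ '' DLV a b c d β γ) (hy' : y' ∈ FLV β γ '' DLV a b c d β γ)
    (hseg : segment ℝ y y' ⊆ FLV β γ '' DLV a b c d β γ) :
    dot2 (psiLV τ₁ τ₂ a b c d β γ y - psiLV τ₁ τ₂ a b c d β γ y') (y - y') ≤
      max τ₁ τ₂ * nrm2 (y - y') ^ 2 :=
  stmt0_general τ₁ τ₂ a b c d ha hc hτ β γ hβ hγ y y' hseg
end

section
/- Assume a, b, c, d > 0, let γ > 0 and β ∈ (0,1) with β ≠ 1/2 such that q_β = 4ab(1+β)² + 4(β²−1)cd > 0. Then there exists η > 0 such that 𝒞_{η,β,γ} ⊆ D_{β,γ}. -/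
open Real Set

/-- The cone `𝒞_{η,β,γ}`, where `x_{β,γ} = (dγ²/c)^{1/(2β−1)}`. -/
noncomputable def CLV (c d β γ η : ℝ) : Set (ℝ × ℝ) :=
  {x | 0 < x.1 ∧ 0 < x.2 ∧
    x.1 / x.2 ∈
      Set.Ioo (0 : ℝ) η ∪
      Set.Ioo ((d * γ ^ 2 / c) ^ (1 / (2 * β - 1)) - η)
        ((d * γ ^ 2 / c) ^ (1 / (2 * β - 1)) + η) ∪
      Set.Ioi (1 / η)}

/-!
The defining form of `D_{β,γ}` is homogeneous of degree 2, so on the open quadrant it equals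
`x₂² F(x₁/x₂)` for a continuous function `F = lvProfile` of the ratio, and it suffices to find
neighbourhoods of `0`, of `x_{β,γ}` and of `∞` on which `F > 0`. At `0` we have
`F(0) = 4β(1+β)bc > 0`. The point `x_{β,γ}` is where the two monomials inside the square
balance, so there `F = 4β(1+β)(ad x² + bc) + q_β x > 0`. Finally the form is invariant under
`(x₁, a, c, γ) ↔ (x₂, b, d, γ⁻¹)`, which exchanges the ratios near `∞` with those near `0`.
-/

noncomputable def lvProfile (a b c d β γ r : ℝ) : ℝ :=
  4 * β * (1 + β) * (a * d * r ^ 2 + b * c)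
    + (4 * a * b * (1 + β) ^ 2 + 4 * (β ^ 2 - 1) * c * d) * r
    - (c * γ⁻¹ * r ^ β - d * γ * r ^ (1 - β)) ^ 2

lemma continuous_lvProfile (a b c d γ : ℝ) {β : ℝ} (hβ : β ∈ Icc (0 : ℝ) 1) :
    Continuous (lvProfile a b c d β γ) := by
  have hpow := Real.continuous_rpow_const hβ.1
  have hpow' := Real.continuous_rpow_const (sub_nonneg.2 hβ.2)
  unfold lvProfile
  fun_prop

lemma mem_DLV_iff {a b c d β γ : ℝ} {x : ℝ × ℝ} (hx₁ : 0 < x.1) (hx₂ : 0 < x.2) :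
    x ∈ DLV a b c d β γ ↔ 0 < lvProfile a b c d β γ (x.1 / x.2) := by
  obtain ⟨x₁, x₂⟩ := x
  have hpow : x₁ ^ β * x₂ ^ (1 - β) = x₂ * (x₁ / x₂) ^ β := by
    rw [Real.div_rpow hx₁.le hx₂.le, Real.rpow_sub hx₂, Real.rpow_one]
    field_simp
  have hpow' : x₁ ^ (1 - β) * x₂ ^ β = x₂ * (x₁ / x₂) ^ (1 - β) := by
    rw [Real.div_rpow hx₁.le hx₂.le, Real.rpow_sub hx₂, Real.rpow_one]
    field_simp
  have hform : 4 * β * (1 + β) * (a * d * x₁ ^ 2 + b * c * x₂ ^ 2)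
        + (4 * a * b * (1 + β) ^ 2 + 4 * (β ^ 2 - 1) * c * d) * (x₁ * x₂)
        - (c * γ⁻¹ * x₁ ^ β * x₂ ^ (1 - β) - d * γ * x₁ ^ (1 - β) * x₂ ^ β) ^ 2
      = x₂ ^ 2 * lvProfile a b c d β γ (x₁ / x₂) := by
    have hsq : c * γ⁻¹ * x₁ ^ β * x₂ ^ (1 - β) - d * γ * x₁ ^ (1 - β) * x₂ ^ β
        = x₂ * (c * γ⁻¹ * (x₁ / x₂) ^ β - d * γ * (x₁ / x₂) ^ (1 - β)) := by
      linear_combination (c * γ⁻¹) * hpow - (d * γ) * hpow'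
    rw [hsq, lvProfile]
    field_simp
  simp only [DLV, mem_ofPred_eq, hform]
  exact ⟨fun h => pos_of_mul_pos_right h.2.2 (by positivity),
    fun h => ⟨hx₁, hx₂, mul_pos (by positivity) h⟩⟩

lemma mem_DLV_swap_iff {a b c d β γ : ℝ} {x : ℝ × ℝ} :
    x.swap ∈ DLV b a d c β γ⁻¹ ↔ x ∈ DLV a b c d β γ := by
  simp only [DLV, mem_ofPred_eq, Prod.fst_swap, Prod.snd_swap, inv_inv]
  constructor <;> rintro ⟨h₁, h₂, h⟩ <;> refine ⟨h₂, h₁, ?_⟩ <;> linear_combination h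

lemma lvProfile_zero_pos (a d γ : ℝ) {b c β : ℝ} (hb : 0 < b) (hc : 0 < c)
    (hβ : β ∈ Ioo (0 : ℝ) 1) : 0 < lvProfile a b c d β γ 0 := by
  rw [lvProfile, Real.zero_rpow hβ.1.ne', Real.zero_rpow (sub_pos.2 hβ.2).ne']
  have hβ₀ := hβ.1
  ring_nf
  positivity

lemma lvProfile_balance_pos {a b c d β γ : ℝ} (ha : 0 ≤ a) (hb : 0 ≤ b) (hc : 0 < c)
    (hd : 0 < d) (hγ : 0 < γ) (hβ : 0 ≤ β) (h2β : 2 * β - 1 ≠ 0)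
    (hq : 0 < 4 * a * b * (1 + β) ^ 2 + 4 * (β ^ 2 - 1) * c * d) :
    0 < lvProfile a b c d β γ ((d * γ ^ 2 / c) ^ (1 / (2 * β - 1))) := by
  set t := (d * γ ^ 2 / c) ^ (1 / (2 * β - 1)) with ht
  have hbase : 0 < d * γ ^ 2 / c := by positivity
  have htpow : t ^ (2 * β - 1) = d * γ ^ 2 / c := by
    rw [ht, ← Real.rpow_mul hbase.le, one_div_mul_cancel h2β, Real.rpow_one]
  have hsplit : t ^ β = t ^ (1 - β) * (d * γ ^ 2 / c) := by
    rw [← htpow, ← Real.rpow_add (Real.rpow_pos_of_pos hbase _)]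
    congr 1
    ring
  have hbalance : c * γ⁻¹ * t ^ β - d * γ * t ^ (1 - β) = 0 := by
    rw [hsplit]
    field_simp
    ring
  rw [lvProfile, hbalance, sq 0, mul_zero, sub_zero]
  exact add_pos_of_nonneg_of_pos (by positivity) (mul_pos hq (by positivity))

lemma exists_ratio_nhds_subset_DLV {a b c d β γ p : ℝ} (hβ : β ∈ Icc (0 : ℝ) 1)
    (hp : 0 < lvProfile a b c d β γ p) :
    ∃ ε > 0, ∀ x : ℝ × ℝ, 0 < x.1 → 0 < x.2 → |x.1 / x.2 - p| < ε → x ∈ DLV a b c d β γ := by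
  obtain ⟨ε, hε, hpos⟩ := Metric.eventually_nhds_iff.1 <|
    (continuous_lvProfile a b c d γ hβ).continuousAt.eventually (eventually_gt_nhds hp)
  exact ⟨ε, hε, fun x hx₁ hx₂ hr => (mem_DLV_iff hx₁ hx₂).2 (hpos hr)⟩

/-- There exists `η > 0` with `𝒞_{η,β,γ} ⊆ D_{β,γ}`. -/
theorem stmt1 (a b c d : ℝ) (ha : 0 < a) (hb : 0 < b) (hc : 0 < c) (hd : 0 < d)
    (γ : ℝ) (hγ : 0 < γ) (β : ℝ) (hβ : β ∈ Set.Ioo (0 : ℝ) 1) (hβ' : β ≠ 1 / 2)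
    (hq : 0 < 4 * a * b * (1 + β) ^ 2 + 4 * (β ^ 2 - 1) * c * d) :
    ∃ η > 0, CLV c d β γ η ⊆ DLV a b c d β γ := by
  have h2β : 2 * β - 1 ≠ 0 := fun h => hβ' (by linarith)
  have hβI : β ∈ Icc (0 : ℝ) 1 := Ioo_subset_Icc_self hβ
  obtain ⟨ε₀, hε₀, hnear₀⟩ :=
    exists_ratio_nhds_subset_DLV hβI (lvProfile_zero_pos a d γ hb hc hβ)
  obtain ⟨ε₁, hε₁, hnear₁⟩ := exists_ratio_nhds_subset_DLV hβI
    (lvProfile_balance_pos ha.le hb.le hc hd hγ hβ.1.le h2β hq)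
  obtain ⟨ε₂, hε₂, hnear₂⟩ :=
    exists_ratio_nhds_subset_DLV hβI (lvProfile_zero_pos b c γ⁻¹ ha hd hβ)
  set η := min ε₀ (min ε₁ ε₂)
  have hη : 0 < η := by positivity
  have hη₀ : η ≤ ε₀ := min_le_left _ _
  have hη₁ : η ≤ ε₁ := (min_le_right _ _).trans (min_le_left _ _)
  have hη₂ : η ≤ ε₂ := (min_le_right _ _).trans (min_le_right _ _)
  refine ⟨η, hη, ?_⟩
  rintro x ⟨hx₁, hx₂, (⟨-, hr⟩ | ⟨hr, hr'⟩) | hr⟩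
  · exact hnear₀ x hx₁ hx₂ (by rw [sub_zero, abs_of_pos (div_pos hx₁ hx₂)]; linarith)
  · exact hnear₁ x hx₁ hx₂ (by rw [abs_sub_lt_iff]; constructor <;> linarith)
  · have hinv : x.2 / x.1 < η := by
      rw [← inv_div]
      exact inv_lt_of_inv_lt₀ hη (by rwa [mem_Ioi, one_div] at hr)
    refine mem_DLV_swap_iff.1 (hnear₂ x.swap hx₂ hx₁ ?_)
    rw [Prod.fst_swap, Prod.snd_swap, sub_zero, abs_of_pos (div_pos hx₂ hx₁)]
    linarith
end

section
/- Assume a, b, c, d > 0, let γ > 0 and β ∈ (0,1) with β ≠ 1/2 such that q_β = 4ab(1+β)² + 4(β²−1)cd > 0. Then there exist η > 0, A > 0 and μ > 0 such that for all y, y' lying in the same connected component of the open cone F_{β,γ}(𝒞_{η,β,γ}) (these components are convex) and satisfying ‖y‖₂ ≥ A and ‖y'‖₂ ≥ A, one has (ψ_{β,γ}(y) − ψ_{β,γ}(y'))·(y − y') ≤ −μ · min(‖y‖₂, ‖y'‖₂) · ‖y − y'‖₂². -/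
/-!
After the rescaling `γ ↦ 1`, write `r = y₁ / y₂`. The symmetric part of `Dψ(y)` is
`β diag(τ₁, τ₂) - y₂^(1/β) M(r)`, where the `2 × 2` matrix `M(r)` depends on the ratio only.
`M(r)` is positive definite at `r = 0`, at `r = ∞` (swap the coordinates) and, because
`q_β > 0`, at the ratio `r*` where the two off-diagonal terms of `M` balance; `r*` is the image
of `x_{β,γ}`. By continuity and compactness `M(r) ≥ λ > 0` on closed sectors around these three
ratios, so `⟨Dψ(z) Δ, Δ⟩ ≤ -μ z₂ ‖Δ‖²` there far from the origin, and integrating along the segment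
from `y'` to `y` (the sectors are convex) gives the estimate. For small `η` the image of `𝒞_η` lies
in the union of three disjoint open sectors, so every connected component lies in one of them.
-/

open Real Set

open Filter Topology

lemma nrm2_nonneg (u : ℝ × ℝ) : 0 ≤ nrm2 u := Real.sqrt_nonneg _

lemma nrm2_sq (u : ℝ × ℝ) : nrm2 u ^ 2 = u.1 ^ 2 + u.2 ^ 2 := Real.sq_sqrt (by positivity)

lemma nrm2_swap (u : ℝ × ℝ) : nrm2 u.swap = nrm2 u := by simp [nrm2, add_comm]

lemma nrm2_le_add {u : ℝ × ℝ} (h₁ : 0 ≤ u.1) (h₂ : 0 ≤ u.2) : nrm2 u ≤ u.1 + u.2 :=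
  Real.sqrt_le_iff.2 ⟨by positivity, by nlinarith⟩

def StronglyDissipativeOn (F : ℝ × ℝ → ℝ × ℝ) (S : Set (ℝ × ℝ)) (A μ : ℝ) : Prop :=
  ∀ y ∈ S, ∀ y' ∈ S, A ≤ nrm2 y → A ≤ nrm2 y' →
    dot2 (F y - F y') (y - y') ≤ -μ * min (nrm2 y) (nrm2 y') * nrm2 (y - y') ^ 2

namespace StronglyDissipativeOn

variable {F : ℝ × ℝ → ℝ × ℝ} {S T : Set (ℝ × ℝ)} {A A' μ μ' : ℝ}

lemma mono (h : StronglyDissipativeOn F S A μ) (hT : T ⊆ S) (hA : A ≤ A') (hμ : μ' ≤ μ) :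
    StronglyDissipativeOn F T A' μ' := by
  intro y hy y' hy' hAy hAy'
  have := mul_nonneg (le_min (nrm2_nonneg y) (nrm2_nonneg y')) (sq_nonneg (nrm2 (y - y')))
  nlinarith [h y (hT hy) y' (hT hy') (hA.trans hAy) (hA.trans hAy')]

lemma swap (h : StronglyDissipativeOn F S A μ) :
    StronglyDissipativeOn (Prod.swap ∘ F ∘ Prod.swap) (Prod.swap ⁻¹' S) A μ := by
  intro y hy y' hy' hAy hAy'
  have := h y.swap hy y'.swap hy' (by rwa [nrm2_swap]) (by rwa [nrm2_swap])
  rw [nrm2_swap, nrm2_swap, ← Prod.swap_sub, nrm2_swap] at this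
  calc _ = dot2 (F y.swap - F y'.swap) (y - y').swap := by
        simp only [dot2, Function.comp_apply, Prod.fst_sub, Prod.snd_sub, Prod.fst_swap,
          Prod.snd_swap]
        ring
    _ ≤ _ := this

end StronglyDissipativeOn

def ratioSet (J : Set ℝ) : Set (ℝ × ℝ) := {y | 0 < y.1 ∧ 0 < y.2 ∧ y.1 / y.2 ∈ J}

lemma ratioSet_subset_ratioSet {J J' : Set ℝ} (h : ∀ t ∈ J, 0 < t → t ∈ J') :
    ratioSet J ⊆ ratioSet J' :=
  fun _ ⟨h₁, h₂, hJ⟩ => ⟨h₁, h₂, h _ hJ (div_pos h₁ h₂)⟩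

lemma ratioSet_Ioi_inv_subset {δ : ℝ} (hδ : 0 < δ) :
    ratioSet (Ioi δ⁻¹) ⊆ Prod.swap ⁻¹' ratioSet (Icc 0 δ) := by
  rintro y ⟨h₁, h₂, hy⟩
  refine ⟨h₂, h₁, (div_pos h₂ h₁).le, ?_⟩
  simpa only [Prod.fst_swap, Prod.snd_swap, inv_div] using (inv_lt_of_inv_lt₀ hδ hy).le

lemma convex_ratioSet_Icc (u v : ℝ) : Convex ℝ (ratioSet (Icc u v)) := by
  refine convex_iff_forall_pos.2 fun y ⟨h₁, h₂, hu, hv⟩ y' ⟨h₁', h₂', hu', hv'⟩ s t hs ht _ => ?_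
  rw [le_div_iff₀ h₂] at hu
  rw [div_le_iff₀ h₂] at hv
  rw [le_div_iff₀ h₂'] at hu'
  rw [div_le_iff₀ h₂'] at hv'
  have hz₂ : 0 < s * y.2 + t * y'.2 := by positivity
  refine ⟨by simp only [Prod.fst_add, Prod.smul_fst, smul_eq_mul]; positivity,
    by simpa using hz₂, ?_, ?_⟩
  · simp only [Prod.fst_add, Prod.snd_add, Prod.smul_fst, Prod.smul_snd, smul_eq_mul]
    rw [le_div_iff₀ hz₂]; nlinarith
  · simp only [Prod.fst_add, Prod.snd_add, Prod.smul_fst, Prod.smul_snd, smul_eq_mul]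
    rw [div_le_iff₀ hz₂]; nlinarith

lemma psiLV_eq_psiLV_one (τ₁ τ₂ a b c d β γ : ℝ) :
    psiLV τ₁ τ₂ a b c d β γ =
      psiLV τ₁ τ₂ a (b * γ ^ (-(1 / β))) (c * γ ^ (-(1 / β))) d β 1 := by
  funext y
  simp only [psiLV, one_rpow, mul_one]

lemma swap_comp_psiLV_comp_swap (τ₁ τ₂ a b c d β : ℝ) :
    Prod.swap ∘ psiLV τ₂ τ₁ b a d c β 1 ∘ Prod.swap = psiLV τ₁ τ₂ a b c d β 1 := by
  funext y
  simp only [psiLV, Function.comp_apply, Prod.swap_prod_mk, Prod.fst_swap, Prod.snd_swap,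
    one_rpow, mul_one]

lemma FLV_image_ratioSet_subset {β γ : ℝ} (hγ : 0 < γ) {J J' : Set ℝ}
    (h : MapsTo (fun t => t ^ β / γ) J J') : FLV β γ '' ratioSet J ⊆ ratioSet J' := by
  rintro _ ⟨x, ⟨h₁, h₂, hJ⟩, rfl⟩
  refine ⟨rpow_pos_of_pos h₁ β, by simp only [FLV]; positivity, ?_⟩
  convert h hJ using 1
  simp only [FLV]
  rw [div_rpow h₁.le h₂.le]
  field_simp

section Jacobian

variable (τ₁ τ₂ a b c d β : ℝ)

noncomputable def jacForm (z Δ : ℝ × ℝ) : ℝ :=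
  (β * τ₁ - a * (1 + β) * z.1 ^ (1 / β) - β * c * z.2 ^ (1 / β)) * Δ.1 ^ 2 +
    (β * τ₂ - b * (1 + β) * z.2 ^ (1 / β) - β * d * z.1 ^ (1 / β)) * Δ.2 ^ 2 -
    (c * z.1 * z.2 ^ (1 / β - 1) + d * z.2 * z.1 ^ (1 / β - 1)) * (Δ.1 * Δ.2)

/-- The determinant of the quadratic form in `Δ` appearing in `jacForm_eq`, at ratio
`z.1 / z.2 = r`. -/
noncomputable def jacGap (r : ℝ) : ℝ :=
  (a * (1 + β) * r ^ (1 / β) + β * c) * (b * (1 + β) + β * d * r ^ (1 / β)) -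
    ((c * r + d * r ^ (1 / β - 1)) / 2) ^ 2

variable {τ₁ τ₂ a b c d β}

lemma hasDerivAt_dot2_psiLV (hβ : β ≠ 0) (w Δ : ℝ × ℝ) {t : ℝ} (h₁ : 0 < (w + t • Δ).1)
    (h₂ : 0 < (w + t • Δ).2) :
    HasDerivAt (fun s => dot2 (psiLV τ₁ τ₂ a b c d β 1 (w + s • Δ)) Δ)
      (jacForm τ₁ τ₂ a b c d β (w + t • Δ) Δ) t := by
  simp only [Prod.fst_add, Prod.snd_add, Prod.smul_fst, Prod.smul_snd, smul_eq_mul] at h₁ h₂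
  have hz₁ : HasDerivAt (fun s => w.1 + s * Δ.1) Δ.1 t := by
    simpa using ((hasDerivAt_id t).mul_const Δ.1).const_add w.1
  have hz₂ : HasDerivAt (fun s => w.2 + s * Δ.2) Δ.2 t := by
    simpa using ((hasDerivAt_id t).mul_const Δ.2).const_add w.2
  have hp₁ := hz₁.rpow_const (p := 1 / β) (Or.inl h₁.ne')
  have hp₂ := hz₂.rpow_const (p := 1 / β) (Or.inl h₂.ne')
  have hsum := (((hz₁.const_mul β).mul (((hp₁.const_mul a).const_sub τ₁).sub
      (hp₂.const_mul c))).mul_const Δ.1).add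
    (((hz₂.const_mul β).mul (((hp₂.const_mul b).const_sub τ₂).sub
      (hp₁.const_mul d))).mul_const Δ.2)
  refine (hsum.congr_deriv ?_).congr_of_eventuallyEq (Eventually.of_forall fun s => ?_)
  · simp only [jacForm, Prod.fst_add, Prod.snd_add, Prod.smul_fst, Prod.smul_snd, smul_eq_mul,
      Pi.sub_apply]
    have e₁ := rpow_sub_one h₁.ne' (1 / β)
    have e₂ := rpow_sub_one h₂.ne' (1 / β)
    rw [eq_div_iff h₁.ne'] at e₁
    rw [eq_div_iff h₂.ne'] at e₂
    rw [← e₁, ← e₂]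
    field_simp
    ring
  · simp only [dot2, psiLV, Prod.fst_add, Prod.snd_add, Prod.smul_fst, Prod.smul_snd,
      smul_eq_mul, one_rpow, mul_one, Pi.add_apply, Pi.mul_apply, Pi.sub_apply]

lemma jacForm_eq {z : ℝ × ℝ} (h₁ : 0 < z.1) (h₂ : 0 < z.2) (Δ : ℝ × ℝ) :
    jacForm τ₁ τ₂ a b c d β z Δ = β * (τ₁ * Δ.1 ^ 2 + τ₂ * Δ.2 ^ 2) - z.2 ^ (1 / β) *
      ((a * (1 + β) * (z.1 / z.2) ^ (1 / β) + β * c) * Δ.1 ^ 2 +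
        (b * (1 + β) + β * d * (z.1 / z.2) ^ (1 / β)) * Δ.2 ^ 2 +
        (c * (z.1 / z.2) + d * (z.1 / z.2) ^ (1 / β - 1)) * (Δ.1 * Δ.2)) := by
  rw [jacForm, div_rpow h₁.le h₂.le, div_rpow h₁.le h₂.le, rpow_sub_one h₁.ne',
    rpow_sub_one h₂.ne']
  field_simp
  ring

end Jacobian

lemma div_mul_le_quadForm {α₁ α₂ e : ℝ} (h : 0 < α₁ + α₂) (x y : ℝ) :
    (α₁ * α₂ - (e / 2) ^ 2) / (α₁ + α₂) * (x ^ 2 + y ^ 2) ≤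
      α₁ * x ^ 2 + α₂ * y ^ 2 + e * (x * y) := by
  -- the difference, times `α₁ + α₂`, is `(α₁ x + e y / 2)² + (α₂ y + e x / 2)²`
  rw [div_mul_eq_mul_div, div_le_iff₀ h]
  nlinarith [sq_nonneg (α₁ * x + e * y / 2), sq_nonneg (α₂ * y + e * x / 2)]

lemma sub_le_of_hasDerivAt_le {f f' : ℝ → ℝ} {C : ℝ}
    (hf : ∀ t ∈ Icc (0 : ℝ) 1, HasDerivAt f (f' t) t) (hC : ∀ t ∈ Icc (0 : ℝ) 1, f' t ≤ C) :
    f 1 - f 0 ≤ C := by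
  have hint : ∀ t ∈ interior (Icc (0 : ℝ) 1), t ∈ Icc (0 : ℝ) 1 := fun _ ht => interior_subset ht
  simpa using (convex_Icc (0 : ℝ) 1).image_sub_le_mul_sub_of_deriv_le
    (fun t ht => (hf t ht).continuousAt.continuousWithinAt)
    (fun t ht => (hf t (hint t ht)).differentiableAt.differentiableWithinAt)
    (fun t ht => (hf t (hint t ht)).deriv ▸ hC t (hint t ht))
    0 (left_mem_Icc.2 zero_le_one) 1 (right_mem_Icc.2 zero_le_one) zero_le_one

section Cone

variable {a b c d β : ℝ}

lemma continuous_jacGap (hβ₀ : 0 < β) (hβ₁ : β ≤ 1) : Continuous (jacGap a b c d β) := by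
  have h₁ := continuous_rpow_const (q := 1 / β) (by positivity)
  have h₂ := continuous_rpow_const (q := 1 / β - 1)
    (by rw [sub_nonneg, le_div_iff₀ hβ₀]; linarith)
  unfold jacGap
  fun_prop

lemma exists_jacForm_le (τ₁ τ₂ : ℝ) (hβ₀ : 0 < β) (hβ₁ : β ≤ 1) (ha : 0 ≤ a) (hc : 0 ≤ c)
    {u v : ℝ} (hu : 0 ≤ u) (huv : u ≤ v) (hgap : ∀ r ∈ Icc u v, 0 < jacGap a b c d β r) :
    ∃ μ > 0, ∃ A ≥ 1, ∀ z ∈ ratioSet (Icc u v), A ≤ z.2 → ∀ Δ : ℝ × ℝ,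
      jacForm τ₁ τ₂ a b c d β z Δ ≤ -(μ * z.2) * (Δ.1 ^ 2 + Δ.2 ^ 2) := by
  set α₁ : ℝ → ℝ := fun r => a * (1 + β) * r ^ (1 / β) + β * c
  set α₂ : ℝ → ℝ := fun r => b * (1 + β) + β * d * r ^ (1 / β)
  have htr : ∀ r ∈ Icc u v, 0 < α₁ r + α₂ r := by
    intro r hr
    have hr₀ : 0 ≤ r ^ (1 / β) := rpow_nonneg (hu.trans hr.1) _
    have h₁ : 0 ≤ α₁ r := by positivity
    have hprod : 0 < α₁ r * α₂ r := by
      have := hgap r hr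
      rw [jacGap] at this
      nlinarith [sq_nonneg ((c * r + d * r ^ (1 / β - 1)) / 2)]
    have h₂ := pos_of_mul_pos_right hprod h₁
    linarith [pos_of_mul_pos_left hprod h₂.le]
  -- `jacGap / trace` bounds the smallest eigenvalue of the symmetric part from below
  set ℓ : ℝ → ℝ := fun r => jacGap a b c d β r / (α₁ r + α₂ r)
  have hcont : ContinuousOn ℓ (Icc u v) := by
    have := continuous_rpow_const (q := 1 / β) (by positivity)
    exact (continuous_jacGap hβ₀ hβ₁).continuousOn.div (by fun_prop) fun r hr => (htr r hr).ne'
  obtain ⟨r₀, hr₀, hmin⟩ := isCompact_Icc.exists_isMinOn (nonempty_Icc.2 huv) hcont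
  have hℓ : 0 < ℓ r₀ := div_pos (hgap r₀ hr₀) (htr r₀ hr₀)
  refine ⟨ℓ r₀ / 2, by positivity, max 1 (2 * (|τ₁| + |τ₂|) / ℓ r₀), le_max_left _ _, ?_⟩
  rintro z ⟨h₁, h₂, hr⟩ hA Δ
  have hz : 1 ≤ z.2 := (le_max_left _ _).trans hA
  have hτ : 2 * (|τ₁| + |τ₂|) ≤ ℓ r₀ * z.2 := by
    rw [← div_le_iff₀' hℓ]; exact (le_max_right _ _).trans hA
  have hX : z.2 ≤ z.2 ^ (1 / β) := self_le_rpow_of_one_le hz (by rw [le_div_iff₀ hβ₀]; linarith)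
  have hsym := (mul_le_mul_of_nonneg_right (hmin hr) (by positivity)).trans
    (div_mul_le_quadForm (htr _ hr) Δ.1 Δ.2)
  have hlin : β * (τ₁ * Δ.1 ^ 2 + τ₂ * Δ.2 ^ 2) ≤ (|τ₁| + |τ₂|) * (Δ.1 ^ 2 + Δ.2 ^ 2) := by
    have hτ' : ∀ τ : ℝ, β * τ ≤ |τ| := fun τ => by
      nlinarith [mul_nonneg hβ₀.le (sub_nonneg.2 (le_abs_self τ)),
        mul_nonneg (sub_nonneg.2 hβ₁) (abs_nonneg τ)]
    nlinarith [mul_le_mul_of_nonneg_right (hτ' τ₁) (sq_nonneg Δ.1),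
      mul_le_mul_of_nonneg_right (hτ' τ₂) (sq_nonneg Δ.2),
      mul_nonneg (abs_nonneg τ₁) (sq_nonneg Δ.2), mul_nonneg (abs_nonneg τ₂) (sq_nonneg Δ.1)]
  have hS : 0 ≤ Δ.1 ^ 2 + Δ.2 ^ 2 := by positivity
  rw [jacForm_eq h₁ h₂]
  nlinarith [mul_le_mul_of_nonneg_left hsym (rpow_nonneg h₂.le (1 / β)),
    mul_le_mul_of_nonneg_right hX (mul_nonneg hℓ.le hS), mul_le_mul_of_nonneg_right hτ hS]

lemma stronglyDissipativeOn_of_jacForm_le {τ₁ τ₂ u v A μ : ℝ} (hβ : β ≠ 0) (hv : 0 ≤ v)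
    (hμ : 0 ≤ μ)
    (h : ∀ z ∈ ratioSet (Icc u v), A ≤ z.2 → ∀ Δ : ℝ × ℝ,
      jacForm τ₁ τ₂ a b c d β z Δ ≤ -(μ * z.2) * (Δ.1 ^ 2 + Δ.2 ^ 2)) :
    StronglyDissipativeOn (psiLV τ₁ τ₂ a b c d β 1) (ratioSet (Icc u v)) ((v + 1) * A)
      (μ / (v + 1)) := by
  intro y hy y' hy' hAy hAy'
  set m := min (nrm2 y) (nrm2 y')
  set Δ := y - y'
  have hnrm : ∀ x ∈ ratioSet (Icc u v), nrm2 x ≤ (v + 1) * x.2 := fun x ⟨h₁, h₂, _, hx⟩ =>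
    (nrm2_le_add h₁.le h₂.le).trans (by rw [div_le_iff₀ h₂] at hx; linarith)
  have hm : m / (v + 1) ≤ min y.2 y'.2 := by
    rw [div_le_iff₀ (by positivity), mul_comm, mul_min_of_nonneg _ _ (by positivity)]
    exact min_le_min (hnrm y hy) (hnrm y' hy')
  have hmA : A ≤ m / (v + 1) := by
    rw [le_div_iff₀ (by positivity)]; exact le_min (by linarith) (by linarith)
  have hseg : ∀ t ∈ Icc (0 : ℝ) 1,
      y' + t • Δ ∈ ratioSet (Icc u v) ∧ m / (v + 1) ≤ (y' + t • Δ).2 := by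
    intro t ht
    refine ⟨(convex_ratioSet_Icc u v).add_smul_sub_mem hy' hy ht, hm.trans ?_⟩
    simp only [Δ, Prod.snd_add, Prod.smul_snd, Prod.snd_sub, smul_eq_mul]
    rcases min_cases y.2 y'.2 with ⟨h, _⟩ | ⟨h, _⟩ <;> rw [h] <;> nlinarith [ht.1, ht.2]
  have hmvt := sub_le_of_hasDerivAt_le
    (f := fun s => dot2 (psiLV τ₁ τ₂ a b c d β 1 (y' + s • Δ)) Δ)
    (C := -(μ * (m / (v + 1))) * nrm2 Δ ^ 2)
    (fun t ht => hasDerivAt_dot2_psiLV hβ y' Δ (hseg t ht).1.1 (hseg t ht).1.2.1)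
    (fun t ht => by
      rw [nrm2_sq]
      refine (h _ (hseg t ht).1 (hmA.trans (hseg t ht).2) Δ).trans ?_
      have := mul_le_mul_of_nonneg_left (hseg t ht).2 hμ
      nlinarith [sq_nonneg Δ.1, sq_nonneg Δ.2])
  simp only [Δ, one_smul, zero_smul, add_zero, add_sub_cancel] at hmvt
  calc dot2 (psiLV τ₁ τ₂ a b c d β 1 y - psiLV τ₁ τ₂ a b c d β 1 y') Δ
      = dot2 (psiLV τ₁ τ₂ a b c d β 1 y) Δ - dot2 (psiLV τ₁ τ₂ a b c d β 1 y') Δ := by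
        simp only [dot2, Prod.fst_sub, Prod.snd_sub]; ring
    _ ≤ _ := hmvt
    _ = _ := by ring

lemma exists_stronglyDissipativeOn_ratioSet_Icc (τ₁ τ₂ : ℝ) (hβ₀ : 0 < β) (hβ₁ : β ≤ 1)
    (ha : 0 ≤ a) (hc : 0 ≤ c) {u v : ℝ} (hu : 0 ≤ u) (huv : u ≤ v)
    (hgap : ∀ r ∈ Icc u v, 0 < jacGap a b c d β r) :
    ∃ A > 0, ∃ μ > 0,
      StronglyDissipativeOn (psiLV τ₁ τ₂ a b c d β 1) (ratioSet (Icc u v)) A μ := by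
  obtain ⟨μ, hμ, A, hA, h⟩ := exists_jacForm_le τ₁ τ₂ hβ₀ hβ₁ ha hc hu huv hgap
  have hv : 0 ≤ v := hu.trans huv
  exact ⟨(v + 1) * A, by positivity, μ / (v + 1), by positivity,
    stronglyDissipativeOn_of_jacForm_le hβ₀.ne' hv hμ.le h⟩

lemma jacGap_zero_pos (hβ₀ : 0 < β) (hβ₁ : β < 1) (hb : 0 < b) (hc : 0 < c) :
    0 < jacGap a b c d β 0 := by
  have hp : (1 : ℝ) < 1 / β := by rw [lt_div_iff₀ hβ₀]; linarith
  simp only [jacGap, zero_rpow (by positivity : 1 / β ≠ 0), zero_rpow (sub_pos.2 hp).ne',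
    mul_zero, zero_add, add_zero, zero_div, sq, sub_zero]
  positivity

lemma jacGap_pos_of_balanced (ha : 0 ≤ a) (hb : 0 ≤ b) (hc : 0 ≤ c) (hd : 0 ≤ d) (hβ₀ : 0 < β)
    (hq : 0 < 4 * a * b * (1 + β) ^ 2 + 4 * (β ^ 2 - 1) * c * d) {r : ℝ} (hr : 0 < r)
    (hbal : c * r = d * r ^ (1 / β - 1)) : 0 < jacGap a b c d β r := by
  have hS : 0 < r ^ (1 / β) := rpow_pos_of_pos hr _
  have hmix : ((c * r + d * r ^ (1 / β - 1)) / 2) ^ 2 = c * d * r ^ (1 / β) := by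
    calc ((c * r + d * r ^ (1 / β - 1)) / 2) ^ 2 = c * r * (d * r ^ (1 / β - 1)) := by
          rw [← hbal]; ring
      _ = c * d * r ^ (1 / β) := by rw [rpow_sub_one hr.ne']; field_simp
  rw [jacGap, hmix]
  have hβ' : 0 ≤ β * (1 + β) := by positivity
  nlinarith [mul_pos hS hq,
    mul_nonneg (mul_nonneg (mul_nonneg ha hd) hβ') (sq_nonneg (r ^ (1 / β))),
    mul_nonneg (mul_nonneg hb hc) hβ']

end Cone

lemma balance_of_rpow_eq {c d β γ x : ℝ} (hβ₀ : 0 < β) (hγ : 0 < γ) (hc : 0 < c) (hx : 0 < x)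
    (hx₂ : x ^ (2 * β - 1) = d * γ ^ 2 / c) :
    c * γ ^ (-(1 / β)) * (x ^ β / γ) = d * (x ^ β / γ) ^ (1 / β - 1) := by
  have hxx : x ^ β * x ^ β = d * γ ^ 2 / c * x := by
    rw [← rpow_add hx, ← hx₂, ← rpow_add_one hx.ne']; ring_nf
  have hr : 0 < x ^ β / γ := by positivity
  have hrp : (x ^ β / γ) ^ (1 / β) = x / γ ^ (1 / β) := by
    rw [div_rpow (rpow_nonneg hx.le _) hγ.le, ← rpow_mul hx.le, mul_one_div_cancel hβ₀.ne',
      rpow_one]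
  rw [rpow_sub_one hr.ne', hrp, rpow_neg hγ.le]
  field_simp
  rw [sq, hxx]
  field_simp

lemma IsPreconnected.subset_or_subset_or_subset {X : Type*} [TopologicalSpace X]
    {s u v w : Set X} (hu : IsOpen u) (hv : IsOpen v) (hw : IsOpen w) (huv : Disjoint u v)
    (huw : Disjoint u w) (hvw : Disjoint v w) (hs : s ⊆ u ∪ v ∪ w) (h : IsPreconnected s) :
    s ⊆ u ∨ s ⊆ v ∨ s ⊆ w := by
  rw [union_assoc] at hs
  refine (h.subset_or_subset hu (hv.union hw) (disjoint_union_right.2 ⟨huv, huw⟩) hs).imp_right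
    fun hs' => h.subset_or_subset hv hw hvw hs'

lemma connectedComponentIn_subset_ratioSet {S : Set (ℝ × ℝ)} {J₁ J₂ J₃ : Set ℝ}
    (h₁ : IsOpen J₁) (h₂ : IsOpen J₂) (h₃ : IsOpen J₃) (h₁₂ : Disjoint J₁ J₂)
    (h₁₃ : Disjoint J₁ J₃) (h₂₃ : Disjoint J₂ J₃) (hS : S ⊆ ratioSet (J₁ ∪ J₂ ∪ J₃))
    (y : ℝ × ℝ) :
    connectedComponentIn S y ⊆ ratioSet J₁ ∨ connectedComponentIn S y ⊆ ratioSet J₂ ∨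
      connectedComponentIn S y ⊆ ratioSet J₃ := by
  set K := connectedComponentIn S y
  have hK : K ⊆ ratioSet (J₁ ∪ J₂ ∪ J₃) := (connectedComponentIn_subset S y).trans hS
  have hρ : ContinuousOn (fun z : ℝ × ℝ => z.1 / z.2) K :=
    continuous_fst.continuousOn.div continuous_snd.continuousOn fun z hz => (hK hz).2.1.ne'
  have himage : (fun z : ℝ × ℝ => z.1 / z.2) '' K ⊆ J₁ ∪ J₂ ∪ J₃ := by
    rintro _ ⟨z, hz, rfl⟩; exact (hK hz).2.2
  have hpull : ∀ {J}, (fun z : ℝ × ℝ => z.1 / z.2) '' K ⊆ J → K ⊆ ratioSet J :=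
    fun hJ z hz => ⟨(hK hz).1, (hK hz).2.1, hJ ⟨z, hz, rfl⟩⟩
  rcases (isPreconnected_connectedComponentIn.image _ hρ).subset_or_subset_or_subset h₁ h₂ h₃
    h₁₂ h₁₃ h₂₃ himage with h | h | h
  exacts [Or.inl (hpull h), Or.inr (Or.inl (hpull h)), Or.inr (Or.inr (hpull h))]

lemma exists_pos_mapsTo {g : ℝ → ℝ} {x : ℝ} {U V W : Set ℝ} (hU : ∀ᶠ t in 𝓝 0, g t ∈ U)
    (hV : ∀ᶠ t in 𝓝 x, g t ∈ V) (hW : ∀ᶠ t in atTop, g t ∈ W) :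
    ∃ η > 0, MapsTo g (Ioo 0 η ∪ Ioo (x - η) (x + η) ∪ Ioi (1 / η)) (U ∪ V ∪ W) := by
  obtain ⟨N, hN⟩ := eventually_atTop.1 hW
  have hinv : ∀ᶠ η in 𝓝[>] (0 : ℝ), N ≤ 1 / η := by
    simpa only [one_div] using tendsto_inv_nhdsGT_zero.eventually_ge_atTop N
  obtain ⟨η, hη, hηU, hηV, hηW⟩ := (eventually_mem_nhdsWithin.and
    (((eventually_ball_subset hU).filter_mono nhdsWithin_le_nhds).and
      (((eventually_ball_subset hV).filter_mono nhdsWithin_le_nhds).and hinv))).exists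
  refine ⟨η, hη, ?_⟩
  rintro t ((ht | ht) | ht)
  · refine Or.inl (Or.inl (hηU ?_))
    rw [Real.ball_eq_Ioo]; exact ⟨by linarith [ht.1, mem_Ioi.1 hη], by simpa using ht.2⟩
  · exact Or.inl (Or.inr (hηV (by rwa [Real.ball_eq_Ioo])))
  · exact Or.inr (hN t (hηW.trans (le_of_lt ht)))

lemma exists_pos_separated {r : ℝ} (hr : 0 < r) {U V : Set ℝ} (hU : U ∈ 𝓝 0) (hV : V ∈ 𝓝 r) :
    ∃ δ > 0, Icc 0 δ ⊆ U ∧ Icc (r - δ) (r + δ) ⊆ V ∧ δ ≤ r - δ ∧ r + δ ≤ δ⁻¹ := by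
  have hinv : ∀ᶠ δ in 𝓝[>] (0 : ℝ), r + 1 ≤ δ⁻¹ :=
    tendsto_inv_nhdsGT_zero.eventually_ge_atTop _
  have hsmall : ∀ᶠ δ in 𝓝 (0 : ℝ), δ < min 1 (r / 2) := Iio_mem_nhds (by positivity)
  obtain ⟨δ, hδ, hδU, hδV, hδs, hδi⟩ := (eventually_mem_nhdsWithin.and
    (((eventually_closedBall_subset hU).filter_mono nhdsWithin_le_nhds).and
      (((eventually_closedBall_subset hV).filter_mono nhdsWithin_le_nhds).and
        ((hsmall.filter_mono nhdsWithin_le_nhds).and hinv)))).exists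
  rw [Real.closedBall_eq_Icc] at hδU hδV
  have h1 := lt_of_lt_of_le hδs (min_le_left _ _)
  have h2 := lt_of_lt_of_le hδs (min_le_right _ _)
  exact ⟨δ, hδ, (Icc_subset_Icc (by simpa using hδ.le) (by simp)).trans hδU, hδV,
    by linarith, by linarith⟩

lemma StronglyDissipativeOn.connectedComponentIn {F : ℝ × ℝ → ℝ × ℝ} {A μ : ℝ}
    {S : Set (ℝ × ℝ)} {J₁ J₂ J₃ : Set ℝ} (h₁ : IsOpen J₁) (h₂ : IsOpen J₂) (h₃ : IsOpen J₃)
    (h₁₂ : Disjoint J₁ J₂) (h₁₃ : Disjoint J₁ J₃) (h₂₃ : Disjoint J₂ J₃)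
    (hF₁ : StronglyDissipativeOn F (ratioSet J₁) A μ)
    (hF₂ : StronglyDissipativeOn F (ratioSet J₂) A μ)
    (hF₃ : StronglyDissipativeOn F (ratioSet J₃) A μ)
    (hS : S ⊆ ratioSet (J₁ ∪ J₂ ∪ J₃)) (y : ℝ × ℝ) :
    StronglyDissipativeOn F (connectedComponentIn S y) A μ := by
  rcases connectedComponentIn_subset_ratioSet h₁ h₂ h₃ h₁₂ h₁₃ h₂₃ hS y with hK | hK | hK
  exacts [hF₁.mono hK le_rfl le_rfl, hF₂.mono hK le_rfl le_rfl, hF₃.mono hK le_rfl le_rfl]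

lemma exists_stronglyDissipativeOn_sectors (τ₁ τ₂ : ℝ) {a b c d β : ℝ} (ha : 0 < a)
    (hb : 0 < b) (hc : 0 < c) (hd : 0 < d) (hβ₀ : 0 < β) (hβ₁ : β < 1)
    (hq : 0 < 4 * a * b * (1 + β) ^ 2 + 4 * (β ^ 2 - 1) * c * d) {r : ℝ} (hr : 0 < r)
    (hbal : c * r = d * r ^ (1 / β - 1)) :
    ∃ δ > 0, δ ≤ r - δ ∧ r + δ ≤ δ⁻¹ ∧ ∃ A > 0, ∃ μ > 0,
      StronglyDissipativeOn (psiLV τ₁ τ₂ a b c d β 1) (ratioSet (Iio δ)) A μ ∧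
      StronglyDissipativeOn (psiLV τ₁ τ₂ a b c d β 1) (ratioSet (Ioo (r - δ) (r + δ))) A μ ∧
      StronglyDissipativeOn (psiLV τ₁ τ₂ a b c d β 1) (ratioSet (Ioi δ⁻¹)) A μ := by
  have hcont := continuous_jacGap (a := a) (b := b) (c := c) (d := d) hβ₀ hβ₁.le
  have hcont' := continuous_jacGap (a := b) (b := a) (c := d) (d := c) hβ₀ hβ₁.le
  obtain ⟨δ, hδ, h₀, hr', hsep₁, hsep₂⟩ := exists_pos_separated hr
    (inter_mem (hcont.continuousAt.eventually (lt_mem_nhds (jacGap_zero_pos hβ₀ hβ₁ hb hc)))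
      (hcont'.continuousAt.eventually (lt_mem_nhds (jacGap_zero_pos hβ₀ hβ₁ ha hd))))
    (hcont.continuousAt.eventually
      (lt_mem_nhds (jacGap_pos_of_balanced ha.le hb.le hc.le hd.le hβ₀ hq hr hbal)))
  obtain ⟨A₁, hA₁, μ₁, hμ₁, h₁⟩ := exists_stronglyDissipativeOn_ratioSet_Icc τ₁ τ₂ hβ₀ hβ₁.le
    ha.le hc.le le_rfl hδ.le fun s hs => (h₀ hs).1
  obtain ⟨A₂, hA₂, μ₂, hμ₂, h₂⟩ := exists_stronglyDissipativeOn_ratioSet_Icc τ₁ τ₂ hβ₀ hβ₁.le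
    ha.le hc.le (by linarith) (by linarith) fun s hs => hr' hs
  obtain ⟨A₃, hA₃, μ₃, hμ₃, h₃⟩ := exists_stronglyDissipativeOn_ratioSet_Icc τ₂ τ₁ hβ₀ hβ₁.le
    hb.le hd.le le_rfl hδ.le fun s hs => (h₀ hs).2
  have h₃' := h₃.swap
  rw [swap_comp_psiLV_comp_swap] at h₃'
  refine ⟨δ, hδ, hsep₁, hsep₂, max A₁ (max A₂ A₃), by positivity, min μ₁ (min μ₂ μ₃),
    by positivity, ?_, ?_, ?_⟩
  · exact h₁.mono (ratioSet_subset_ratioSet fun t ht ht₀ => ⟨ht₀.le, le_of_lt ht⟩)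
      (le_max_left _ _) (min_le_left _ _)
  · exact h₂.mono (ratioSet_subset_ratioSet fun t ht _ => Ioo_subset_Icc_self ht)
      ((le_max_left _ _).trans (le_max_right _ _)) ((min_le_right _ _).trans (min_le_left _ _))
  · exact h₃'.mono (ratioSet_Ioi_inv_subset hδ)
      ((le_max_right _ _).trans (le_max_right _ _)) ((min_le_right _ _).trans (min_le_right _ _))

lemma exists_pos_FLV_image_CLV_subset {c d β γ δ : ℝ} (hβ₀ : 0 < β) (hγ : 0 < γ) (hδ : 0 < δ) :
    ∃ η > 0, FLV β γ '' CLV c d β γ η ⊆ ratioSet (Iio δ ∪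
      Ioo (((d * γ ^ 2 / c) ^ (1 / (2 * β - 1))) ^ β / γ - δ)
        (((d * γ ^ 2 / c) ^ (1 / (2 * β - 1))) ^ β / γ + δ) ∪ Ioi δ⁻¹) := by
  set x := (d * γ ^ 2 / c) ^ (1 / (2 * β - 1))
  have hg : Continuous fun t : ℝ => t ^ β / γ := (continuous_rpow_const hβ₀.le).div_const γ
  have hg₀ : ∀ᶠ t in 𝓝 0, t ^ β / γ ∈ Iio δ :=
    hg.continuousAt.eventually (Iio_mem_nhds (by simpa [zero_rpow hβ₀.ne'] using hδ))
  have hgx : ∀ᶠ t in 𝓝 x, t ^ β / γ ∈ Ioo (x ^ β / γ - δ) (x ^ β / γ + δ) :=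
    hg.continuousAt.eventually (isOpen_Ioo.mem_nhds ⟨by linarith, by linarith⟩)
  have hgtop : ∀ᶠ t in atTop, t ^ β / γ ∈ Ioi δ⁻¹ :=
    ((tendsto_rpow_atTop hβ₀).atTop_div_const hγ).eventually_gt_atTop δ⁻¹
  obtain ⟨η, hη, hmaps⟩ := exists_pos_mapsTo hg₀ hgx hgtop
  -- `CLV c d β γ η` unfolds to `ratioSet` of the domain of `hmaps`
  exact ⟨η, hη, FLV_image_ratioSet_subset hγ hmaps⟩

/-- Strengthened concavity estimate on the connected components of
`F_{β,γ}(𝒞_{η,β,γ})` far from the origin. -/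
theorem stmt2 (τ₁ τ₂ a b c d : ℝ) (ha : 0 < a) (hb : 0 < b) (hc : 0 < c) (hd : 0 < d)
    (γ : ℝ) (hγ : 0 < γ) (β : ℝ) (hβ : β ∈ Set.Ioo (0 : ℝ) 1) (hβ' : β ≠ 1 / 2)
    (hq : 0 < 4 * a * b * (1 + β) ^ 2 + 4 * (β ^ 2 - 1) * c * d) :
    ∃ η > 0, ∃ A > 0, ∃ μ > 0,
      ∀ y ∈ FLV β γ '' CLV c d β γ η,
        ∀ y' ∈ connectedComponentIn (FLV β γ '' CLV c d β γ η) y,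
          A ≤ nrm2 y → A ≤ nrm2 y' →
            dot2 (psiLV τ₁ τ₂ a b c d β γ y - psiLV τ₁ τ₂ a b c d β γ y') (y - y') ≤
              -μ * min (nrm2 y) (nrm2 y') * nrm2 (y - y') ^ 2 := by
  obtain ⟨hβ₀, hβ₁⟩ := hβ
  have hg : 0 < γ ^ (-(1 / β)) := rpow_pos_of_pos hγ _
  have hx₂ : ((d * γ ^ 2 / c) ^ (1 / (2 * β - 1))) ^ (2 * β - 1) = d * γ ^ 2 / c := by
    rw [one_div, rpow_inv_rpow (by positivity) fun h => hβ' (by linarith)]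
  set x := (d * γ ^ 2 / c) ^ (1 / (2 * β - 1))
  have hx : 0 < x := rpow_pos_of_pos (by positivity) _
  have hbal := balance_of_rpow_eq hβ₀ hγ hc hx hx₂
  have hq' : 0 < 4 * a * (b * γ ^ (-(1 / β))) * (1 + β) ^ 2 +
      4 * (β ^ 2 - 1) * (c * γ ^ (-(1 / β))) * d := by
    calc 0 < γ ^ (-(1 / β)) * (4 * a * b * (1 + β) ^ 2 + 4 * (β ^ 2 - 1) * c * d) :=
          mul_pos hg hq
      _ = _ := by ring
  obtain ⟨δ, hδ, hsep₁, hsep₂, A, hA, μ, hμ, hL, hM, hH⟩ :=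
    exists_stronglyDissipativeOn_sectors τ₁ τ₂ ha (by positivity) (by positivity) hd hβ₀ hβ₁ hq'
      (by positivity) hbal
  obtain ⟨η, hη, hS⟩ := exists_pos_FLV_image_CLV_subset (c := c) (d := d) hβ₀ hγ hδ
  refine ⟨η, hη, A, hA, μ, hμ, fun y hy y' hy' => ?_⟩
  rw [psiLV_eq_psiLV_one]
  refine hL.connectedComponentIn isOpen_Iio isOpen_Ioo isOpen_Ioi ?_ ?_ ?_ hM hH
    hS y y (mem_connectedComponentIn hy) y' hy'
  all_goals
    refine disjoint_left.2 fun t h₁ h₂ => ?_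
    simp only [mem_Iio, mem_Ioo, mem_Ioi] at h₁ h₂
    nlinarith [inv_pos.2 hδ, mul_inv_cancel₀ hδ.ne']
end

section
/- Let x₀ ∈ [0,∞)², and suppose x : [0,∞) → [0,∞)² satisfies x(0) = x₀ and x'(t) = b(x(t)) for all t ≥ 0; let v : [0,∞) → [0,∞) satisfy v(0) = 0 and v'(t) = 1 + x₁(t) + x₂(t) for all t ≥ 0; and let z : [0,∞) → S̄ satisfy z(0) = 𝒦(x₀) and z'(s) = H(z(s)) for all s ≥ 0. Then 𝒦(x(t)) = z(v(t)) for all t ≥ 0. -/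
open Real Set

/-- The competitive Lotka–Volterra vector field. -/
def bLV (τ₁ τ₂ a b c d : ℝ) (x : ℝ × ℝ) : ℝ × ℝ :=
  (x.1 * (τ₁ - a * x.1 - c * x.2), x.2 * (τ₂ - b * x.2 - d * x.1))

/-- The Poincaré compactification map `𝒦`. -/
noncomputable def Kmap (x : ℝ × ℝ) : ℝ × ℝ × ℝ :=
  (x.1 / (1 + x.1 + x.2), x.2 / (1 + x.1 + x.2), 1 / (1 + x.1 + x.2))

/-- The compactified vector field `H` on the closed simplex. -/
def Hfield (τ₁ τ₂ a b c d : ℝ) (y : ℝ × ℝ × ℝ) : ℝ × ℝ × ℝ :=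
  (y.1 * y.2.1 * ((b - c) * y.2.1 + (d - a) * y.1)
      + y.1 * y.2.2 * ((τ₁ - τ₂ - c) * y.2.1 - a * y.1 + τ₁ * y.2.2),
   y.1 * y.2.1 * ((a - d) * y.1 + (c - b) * y.2.1)
      + y.2.1 * y.2.2 * ((τ₂ - τ₁ - d) * y.1 - b * y.2.1 + τ₂ * y.2.2),
   y.2.2 * (a * y.1 ^ 2 + b * y.2.1 ^ 2 + (c + d) * y.1 * y.2.1
      - τ₁ * y.1 * y.2.2 - τ₂ * y.2.1 * y.2.2))

/-- The closed simplex `S̄`. -/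
def Sbar : Set (ℝ × ℝ × ℝ) :=
  {y | y.1 ∈ Set.Icc (0 : ℝ) 1 ∧ y.2.1 ∈ Set.Icc (0 : ℝ) 1 ∧ y.2.2 ∈ Set.Icc (0 : ℝ) 1 ∧
    y.1 + y.2.1 + y.2.2 = 1}

/-!
Along a solution `x` of `x' = b(x)`, the quotient rule gives
`d/dt 𝒦(x(t)) = (1 + x₁ + x₂) H(𝒦(x(t)))`, and the chain rule gives the same equation for
`z ∘ v`. Both curves start at `𝒦(x₀)` and stay in `S̄`, on which the polynomial field `H` is
Lipschitz; since the time factor `1 + x₁ + x₂` is bounded on compact intervals, the Gronwall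
uniqueness theorem identifies the two curves.
-/

theorem eqOn_Icc_of_hasDerivAt_smul_of_lipschitzOnWith {E : Type*} [NormedAddCommGroup E]
    [NormedSpace ℝ E] {F : E → E} {S : Set E} {K : NNReal}
    (hF : LipschitzOnWith K F S) {u : ℝ → ℝ} {f g : ℝ → E} {a b : ℝ}
    (hu : ContinuousOn u (Icc a b))
    (hf : ∀ s ∈ Icc a b, HasDerivAt f (u s • F (f s)) s) (hfS : ∀ s ∈ Icc a b, f s ∈ S)
    (hg : ∀ s ∈ Icc a b, HasDerivAt g (u s • F (g s)) s) (hgS : ∀ s ∈ Icc a b, g s ∈ S)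
    (hfg : f a = g a) :
    EqOn f g (Icc a b) := by
  obtain ⟨C, hC⟩ := isCompact_Icc.exists_bound_of_continuousOn hu
  have hLip : ∀ s ∈ Ico a b, LipschitzOnWith (C.toNNReal * K) (fun y => u s • F y) S := by
    intro s hs
    refine LipschitzOnWith.of_dist_le_mul fun y hy y' hy' => ?_
    rw [dist_smul₀, NNReal.coe_mul, Real.coe_toNNReal', mul_assoc]
    exact mul_le_mul ((hC s (Ico_subset_Icc_self hs)).trans (le_max_left _ _))
      (hF.dist_le_mul y hy y' hy') dist_nonneg (le_max_right _ _)
  exact ODE_solution_unique_of_mem_Icc_right hLip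
    (fun s hs => (hf s hs).continuousAt.continuousWithinAt)
    (fun s hs => (hf s (Ico_subset_Icc_self hs)).hasDerivWithinAt)
    (fun s hs => hfS s (Ico_subset_Icc_self hs))
    (fun s hs => (hg s hs).continuousAt.continuousWithinAt)
    (fun s hs => (hg s (Ico_subset_Icc_self hs)).hasDerivWithinAt)
    (fun s hs => hgS s (Ico_subset_Icc_self hs)) hfg

theorem Sbar_subset_closedBall : Sbar ⊆ Metric.closedBall 0 1 := by
  rintro y ⟨h₁, h₂, h₃, -⟩
  simp only [Metric.mem_closedBall, dist_zero_right, Prod.norm_def, Real.norm_eq_abs,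
    max_le_iff, abs_le]
  exact ⟨⟨by linarith [h₁.1], h₁.2⟩, ⟨by linarith [h₂.1], h₂.2⟩, ⟨by linarith [h₃.1], h₃.2⟩⟩

theorem exists_lipschitzOnWith_Hfield (τ₁ τ₂ a b c d : ℝ) :
    ∃ K, LipschitzOnWith K (Hfield τ₁ τ₂ a b c d) Sbar := by
  have hH : ContDiff ℝ 1 (Hfield τ₁ τ₂ a b c d) := by unfold Hfield; fun_prop
  obtain ⟨K, hK⟩ := hH.contDiffOn.exists_lipschitzOnWith one_ne_zero (convex_closedBall 0 1)
    (isCompact_closedBall 0 1)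
  exact ⟨K, hK.mono Sbar_subset_closedBall⟩

theorem Kmap_mem_Sbar {p : ℝ × ℝ} (h₁ : 0 ≤ p.1) (h₂ : 0 ≤ p.2) : Kmap p ∈ Sbar := by
  have hN : 0 < 1 + p.1 + p.2 := by linarith
  refine ⟨⟨div_nonneg h₁ hN.le, (div_le_one hN).mpr (by linarith)⟩,
    ⟨div_nonneg h₂ hN.le, (div_le_one hN).mpr (by linarith)⟩,
    ⟨div_nonneg zero_le_one hN.le, (div_le_one hN).mpr (by linarith)⟩, ?_⟩
  simp only [Kmap]
  field_simp
  ring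

theorem hasDerivAt_Kmap_comp_of_hasDerivAt_bLV {τ₁ τ₂ a b c d t : ℝ} {x : ℝ → ℝ × ℝ}
    (hx : HasDerivAt x (bLV τ₁ τ₂ a b c d (x t)) t) (hN : 1 + (x t).1 + (x t).2 ≠ 0) :
    HasDerivAt (fun s => Kmap (x s))
      ((1 + (x t).1 + (x t).2) • Hfield τ₁ τ₂ a b c d (Kmap (x t))) t := by
  have hx₁ : HasDerivAt (fun s => (x s).1) (bLV τ₁ τ₂ a b c d (x t)).1 t := by
    simpa using hx.hasFDerivAt.fst.hasDerivAt
  have hx₂ : HasDerivAt (fun s => (x s).2) (bLV τ₁ τ₂ a b c d (x t)).2 t := by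
    simpa using hx.hasFDerivAt.snd.hasDerivAt
  have hN' : HasDerivAt (fun s => 1 + (x s).1 + (x s).2)
      ((bLV τ₁ τ₂ a b c d (x t)).1 + (bLV τ₁ τ₂ a b c d (x t)).2) t :=
    (hx₁.const_add 1).add hx₂
  have hquot : HasDerivAt (fun s => Kmap (x s)) _ t :=
    (hx₁.div hN' hN).prodMk ((hx₂.div hN' hN).prodMk ((hasDerivAt_const t (1 : ℝ)).div hN' hN))
  refine hquot.congr_deriv ?_
  simp only [Kmap, Hfield, bLV, Prod.smul_mk, smul_eq_mul, Prod.mk.injEq]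
  refine ⟨?_, ?_, ?_⟩ <;> (field_simp; ring)

theorem stmt3_general (τ₁ τ₂ a b c d : ℝ)
    (x₀ : ℝ × ℝ)
    (x : ℝ → ℝ × ℝ) (hx0 : x 0 = x₀)
    (hxmem : ∀ t : ℝ, 0 ≤ t → 0 ≤ (x t).1 ∧ 0 ≤ (x t).2)
    (hxder : ∀ t : ℝ, 0 ≤ t → HasDerivAt x (bLV τ₁ τ₂ a b c d (x t)) t)
    (v : ℝ → ℝ) (hv0 : v 0 = 0) (hvmem : ∀ t : ℝ, 0 ≤ t → 0 ≤ v t)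
    (hvder : ∀ t : ℝ, 0 ≤ t → HasDerivAt v (1 + (x t).1 + (x t).2) t)
    (z : ℝ → ℝ × ℝ × ℝ) (hz0 : z 0 = Kmap x₀)
    (hzmem : ∀ s : ℝ, 0 ≤ s → z s ∈ Sbar)
    (hzder : ∀ s : ℝ, 0 ≤ s → HasDerivAt z (Hfield τ₁ τ₂ a b c d (z s)) s) :
    ∀ t : ℝ, 0 ≤ t → Kmap (x t) = z (v t) := by
  intro t ht
  obtain ⟨K, hK⟩ := exists_lipschitzOnWith_Hfield τ₁ τ₂ a b c d
  have hN : ∀ s, 0 ≤ s → 1 + (x s).1 + (x s).2 ≠ 0 := fun s hs => by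
    linarith [hxmem s hs]
  have hu : ContinuousOn (fun s => 1 + (x s).1 + (x s).2) (Icc 0 t) := fun s hs =>
    have hxs := (hxder s hs.1).continuousAt
    ((continuousAt_const.add hxs.fst).add hxs.snd).continuousWithinAt
  refine eqOn_Icc_of_hasDerivAt_smul_of_lipschitzOnWith hK hu
    (fun s hs => hasDerivAt_Kmap_comp_of_hasDerivAt_bLV (hxder s hs.1) (hN s hs.1))
    (fun s hs => Kmap_mem_Sbar (hxmem s hs.1).1 (hxmem s hs.1).2)
    (fun s hs => (hzder (v s) (hvmem s hs.1)).scomp s (hvder s hs.1))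
    (fun s hs => hzmem (v s) (hvmem s hs.1)) (by simp only [Function.comp, hx0, hv0, hz0])
    ⟨ht, le_rfl⟩

/-- Poincaré compactification of the Lotka–Volterra flow: `𝒦(x(t)) = z(v(t))`. -/
theorem stmt3 (τ₁ τ₂ a b c d : ℝ) (ha : 0 ≤ a) (hb : 0 ≤ b) (hc : 0 ≤ c) (hd : 0 ≤ d)
    (x₀ : ℝ × ℝ) (hx₀ : 0 ≤ x₀.1 ∧ 0 ≤ x₀.2)
    (x : ℝ → ℝ × ℝ) (hx0 : x 0 = x₀)
    (hxmem : ∀ t : ℝ, 0 ≤ t → 0 ≤ (x t).1 ∧ 0 ≤ (x t).2)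
    (hxder : ∀ t : ℝ, 0 ≤ t → HasDerivAt x (bLV τ₁ τ₂ a b c d (x t)) t)
    (v : ℝ → ℝ) (hv0 : v 0 = 0) (hvmem : ∀ t : ℝ, 0 ≤ t → 0 ≤ v t)
    (hvder : ∀ t : ℝ, 0 ≤ t → HasDerivAt v (1 + (x t).1 + (x t).2) t)
    (z : ℝ → ℝ × ℝ × ℝ) (hz0 : z 0 = Kmap x₀)
    (hzmem : ∀ s : ℝ, 0 ≤ s → z s ∈ Sbar)
    (hzder : ∀ s : ℝ, 0 ≤ s → HasDerivAt z (Hfield τ₁ τ₂ a b c d (z s)) s) :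
    ∀ t : ℝ, 0 ≤ t → Kmap (x t) = z (v t) :=
  stmt3_general τ₁ τ₂ a b c d x₀ x hx0 hxmem hxder v hv0 hvmem hvder z hz0 hzmem hzder
end

section
/- Assume a > 0 and b > 0 (and c, d ≥ 0). For every T > 0 there exists a constant c_T > 0 such that for every x₀ ∈ [0,∞)², every solution x : [0,T] → [0,∞)² of x'(t) = b(x(t)) with x(0) = x₀, and every t ∈ (0,T], one has x₁(t) + x₂(t) ≤ c_T / t. The constant c_T does not depend on x₀. -/
/-! The total population `S = x₁ + x₂` of a nonnegative solution satisfies the logistic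
inequality `S' ≤ τ S - (m / 2) S²` with `τ = max τ₁ τ₂ 0` and `m = min a b`. For `C` large
(`C = 2 (2 + τ T) / m`), the barrier `C / t` is a strict supersolution on `(0, T]`; since it
blows up at `0` while `S` is bounded, it lies above `S` near `0`, and the fencing theorem
keeps it above `S` up to time `T`. -/

open Real Set

lemma bLV_fst_add_bLV_snd_le {τ₁ τ₂ a b c d τ m : ℝ} (hτ₁ : τ₁ ≤ τ) (hτ₂ : τ₂ ≤ τ) (hm : 0 ≤ m)
    (hma : m ≤ a) (hmb : m ≤ b) (hc : 0 ≤ c) (hd : 0 ≤ d) {x : ℝ × ℝ} (h₁ : 0 ≤ x.1)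
    (h₂ : 0 ≤ x.2) :
    (bLV τ₁ τ₂ a b c d x).1 + (bLV τ₁ τ₂ a b c d x).2 ≤
      τ * (x.1 + x.2) - m / 2 * (x.1 + x.2) ^ 2 := by
  simp only [bLV]
  nlinarith [mul_nonneg hm (sq_nonneg (x.1 - x.2)), mul_nonneg (sub_nonneg.2 hma) (sq_nonneg x.1),
    mul_nonneg (sub_nonneg.2 hmb) (sq_nonneg x.2), mul_nonneg (mul_nonneg hc h₁) h₂,
    mul_nonneg (mul_nonneg hd h₁) h₂, mul_nonneg (sub_nonneg.2 hτ₁) h₁,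
    mul_nonneg (sub_nonneg.2 hτ₂) h₂]

lemma logistic_lt_neg_div_sq {τ k C s : ℝ} (hC : 0 < C) (hs : 0 < s) (h : 1 + τ * s < k * C) :
    τ * (C / s) - k * (C / s) ^ 2 < -C / s ^ 2 := by
  have key : C * (τ * s - k * C) < -C := by nlinarith
  calc τ * (C / s) - k * (C / s) ^ 2 = C * (τ * s - k * C) / s ^ 2 := by field_simp
    _ < -C / s ^ 2 := by gcongr

lemma exists_mem_Ioc_le_div_of_forall_le {f : ℝ → ℝ} {C t M : ℝ} (hC : 0 < C) (ht : 0 < t)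
    (hM : ∀ s ∈ Ioc 0 t, f s ≤ M) : ∃ ε ∈ Ioc 0 t, f ε ≤ C / ε := by
  set ε := min t (C / (max M 0 + 1))
  have hM1 : 0 < max M 0 + 1 := by positivity
  have hε : 0 < ε := lt_min ht (by positivity)
  refine ⟨ε, ⟨hε, min_le_left _ _⟩, ?_⟩
  have : ε * (max M 0 + 1) ≤ C := (le_div_iff₀ hM1).1 (min_le_right _ _)
  rw [le_div_iff₀ hε]
  nlinarith [hM ε ⟨hε, min_le_left _ _⟩, le_max_left M 0, le_max_right M 0]

theorem le_div_of_hasDerivWithinAt_le_logistic {f f' : ℝ → ℝ} {τ k T : ℝ} (hτ : 0 ≤ τ)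
    (hk : 0 < k) (hf : ∀ t ∈ Icc 0 T, HasDerivWithinAt f (f' t) (Icc 0 T) t)
    (hf' : ∀ t ∈ Icc 0 T, f' t ≤ τ * f t - k * f t ^ 2) :
    ∀ t ∈ Ioc 0 T, f t ≤ (2 + τ * T) / k / t := by
  intro t ⟨ht, htT⟩
  set C := (2 + τ * T) / k
  have hC : 0 < C := by have := ht.trans_le htT; positivity
  have hkC : k * C = 2 + τ * T := mul_div_cancel₀ _ hk.ne'
  have hcont : ContinuousOn f (Icc 0 T) := fun s hs => (hf s hs).continuousWithinAt
  obtain ⟨M, hM⟩ := isCompact_Icc.exists_bound_of_continuousOn hcont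
  obtain ⟨ε, ⟨hε, hεt⟩, hfε⟩ := exists_mem_Ioc_le_div_of_forall_le hC ht
    fun s hs => (le_abs_self _).trans (hM s ⟨hs.1.le, hs.2.trans htT⟩)
  have hIcc : Icc ε t ⊆ Icc 0 T := Icc_subset_Icc hε.le htT
  refine image_le_of_deriv_right_lt_deriv_boundary' (hcont.mono hIcc)
    (fun s hs => (hf s (hIcc (Ico_subset_Icc_self hs))).mono_of_mem_nhdsWithin
      (Icc_mem_nhdsGE_of_mem ⟨(hIcc (Ico_subset_Icc_self hs)).1, hs.2.trans_le htT⟩))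
    hfε (fun s hs => continuousWithinAt_const.div continuousWithinAt_id (hε.trans_le hs.1).ne')
    (B' := fun s => -C / s ^ 2) (fun s hs => ?_) (fun s hs hfs => ?_) ⟨hεt, le_rfl⟩
  · have hs : s ≠ 0 := (hε.trans_le hs.1).ne'
    have h := ((hasDerivAt_inv hs).const_mul C).hasDerivWithinAt (s := Ici s)
    simp only [← div_eq_mul_inv, mul_neg, ← neg_div] at h
    exact h
  · have hs0 : 0 < s := hε.trans_le hs.1
    have hτs : τ * s ≤ τ * T := by gcongr; exact hs.2.le.trans htT
    calc f' s ≤ τ * f s - k * f s ^ 2 := hf' s (hIcc (Ico_subset_Icc_self hs))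
      _ < -C / s ^ 2 := hfs ▸ logistic_lt_neg_div_sq hC hs0 (by linarith)

lemma HasDerivWithinAt.fst_add_snd {x : ℝ → ℝ × ℝ} {x' : ℝ × ℝ} {s : Set ℝ} {t : ℝ}
    (h : HasDerivWithinAt x x' s t) :
    HasDerivWithinAt (fun t => (x t).1 + (x t).2) (x'.1 + x'.2) s t :=
  (hasFDerivAt_fst.comp_hasDerivWithinAt t h).add (hasFDerivAt_snd.comp_hasDerivWithinAt t h)

/-- Uniform `c_T / t` bound for the Lotka–Volterra flow, independent of the
initial condition. -/
theorem stmt4 (τ₁ τ₂ a b c d : ℝ) (ha : 0 < a) (hb : 0 < b) (hc : 0 ≤ c) (hd : 0 ≤ d)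
    (T : ℝ) (hT : 0 < T) :
    ∃ cT > 0, ∀ x₀ : ℝ × ℝ, 0 ≤ x₀.1 → 0 ≤ x₀.2 →
      ∀ x : ℝ → ℝ × ℝ, x 0 = x₀ →
        (∀ t ∈ Set.Icc (0 : ℝ) T, 0 ≤ (x t).1 ∧ 0 ≤ (x t).2) →
        (∀ t ∈ Set.Icc (0 : ℝ) T,
          HasDerivWithinAt x (bLV τ₁ τ₂ a b c d (x t)) (Set.Icc (0 : ℝ) T) t) →
        ∀ t ∈ Set.Ioc (0 : ℝ) T, (x t).1 + (x t).2 ≤ cT / t := by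
  set τ := max (max τ₁ τ₂) 0
  have hm : 0 < min a b := lt_min ha hb
  refine ⟨(2 + τ * T) / (min a b / 2), by positivity, fun x₀ _ _ x _ hpos hderiv => ?_⟩
  refine le_div_of_hasDerivWithinAt_le_logistic (le_max_right _ _) (half_pos hm)
    (fun t ht => (hderiv t ht).fst_add_snd) fun t ht => ?_
  exact bLV_fst_add_bLV_snd_le ((le_max_left _ _).trans (le_max_left _ _))
    ((le_max_right _ _).trans (le_max_left _ _)) hm.le (min_le_left _ _) (min_le_right _ _) hc hd
    (hpos t ht).1 (hpos t ht).2
end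

section
/- Assume a, b, c, d > 0 with either (b > c and a ≤ d) or (b ≥ c and a < d). Then for every x₀ ∈ (0,∞)², every ε > 0 and every T > 0, there exists r₀ such that for all r ≥ r₀, the exit time T_ε(r) := inf{ t ≥ 0 : x^r(t) ∉ (ε,∞)² } satisfies T_ε(r) ≤ T and T_ε(r) = inf{ t ≥ 0 : x₂^r(t) ≤ ε }; i.e. the flow started from r·x₀ exits 𝒟_ε = (ε,∞)² before time T and does so through its lower boundary (second coordinate reaching ε). -/
open Real Set Filter ENNReal

/-- Exit time of `t ↦ X r t` from the domain `𝒟_ε = (ε,∞)²`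
(with values in `ℝ≥0∞`, `inf ∅ = ∞`). -/
noncomputable def exitT (X : ℝ → ℝ → ℝ × ℝ) (ε r : ℝ) : ℝ≥0∞ :=
  sInf (ENNReal.ofReal '' {t : ℝ | 0 ≤ t ∧ ¬(ε < (X r t).1 ∧ ε < (X r t).2)})

/-!
Along a trajectory with positive initial data each coordinate equals its initial value times
`exp (τᵢ t - ∫₀ᵗ (linear combination of x₁, x₂))`. With `A = ∫₀ᵗ x₁` and `B = ∫₀ᵗ x₂` this gives
`log x₁ - log x₂ = log (x₀.1 / x₀.2) + (τ₁ - τ₂) t + (b - c) B + (d - a) A`, where `r` has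
cancelled and, since `c ≤ b` and `a ≤ d`, the potential `(b - c) B + (d - a) A` is nondecreasing.
If the potential is large at time `t`, then `x₁(t)` dominates `x₂(t)`. If it is bounded, then
`x₁ / x₂` is bounded above and below on `[0, t]`, hence so is `A / B`, and since `c < b` or
`a < d` both `A` and `B` are bounded; then `log x₁(t) = log r + O(1)`. Either way, for large `r`,
`x₂(t) > ε` forces `x₁(t)` above any prescribed level. But `x₁' ≤ x₁ (τ₁ - a x₁)` bounds `x₁(T)`
independently of `r`, so `x₂` reaches `ε` before `T`, while `x₁` stays above `ε` until then.
-/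

theorem intervalIntegrable_of_continuousOn_Ici {f : ℝ → ℝ} (hf : ContinuousOn f (Ici 0))
    {t : ℝ} (ht : 0 ≤ t) : IntervalIntegrable f MeasureTheory.volume 0 t :=
  (hf.mono <| by rw [uIcc_of_le ht]; exact Icc_subset_Ici_self).intervalIntegrable

theorem monotoneOn_integral_of_nonneg {f : ℝ → ℝ} (hf : ContinuousOn f (Ici 0))
    (hnn : ∀ t, 0 ≤ t → 0 ≤ f t) : MonotoneOn (fun t => ∫ s in (0 : ℝ)..t, f s) (Ici 0) :=
  fun s hs t _ hst => intervalIntegral.integral_mono_interval le_rfl hs hst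
    (by filter_upwards [MeasureTheory.ae_restrict_mem measurableSet_Ioc] with u hu
        using hnn u hu.1.le)
    (intervalIntegrable_of_continuousOn_Ici hf (le_trans hs hst))

theorem abs_mul_le_of_mem_Icc (τ : ℝ) {t T : ℝ} (ht : t ∈ Icc 0 T) : |τ * t| ≤ |τ| * T := by
  rw [abs_mul, abs_of_nonneg ht.1]
  exact mul_le_mul_of_nonneg_left ht.2 (abs_nonneg τ)

theorem eq_mul_exp_integral_of_hasDerivAt {f φ : ℝ → ℝ} (hφ : ContinuousOn φ (Ici 0))
    (hf : ∀ t, 0 ≤ t → HasDerivAt f (f t * φ t) t) {t : ℝ} (ht : 0 ≤ t) :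
    f t = f 0 * exp (∫ s in (0 : ℝ)..t, φ s) := by
  set ψ : ℝ → ℝ := fun s => φ (max s 0)
  have hψ : Continuous ψ :=
    hφ.comp_continuous (continuous_id.max continuous_const) fun s => le_max_right s 0
  have hψφ : ∀ s, 0 ≤ s → ψ s = φ s := fun s hs => by simp only [ψ, max_eq_left hs]
  set F : ℝ → ℝ := fun u => ∫ s in (0 : ℝ)..u, ψ s
  have hF : ∀ u, HasDerivAt F (ψ u) u := fun u => (hψ.integral_hasStrictDerivAt 0 u).hasDerivAt
  have hconst : ∀ u ∈ Icc 0 t, f u * exp (-F u) = f 0 * exp (-F 0) := by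
    refine constant_of_has_deriv_right_zero (fun u hu => ?_) fun u hu => ?_
    · exact ((hf u hu.1).continuousAt.mul (hF u).continuousAt.neg.rexp).continuousWithinAt
    · have hd : HasDerivAt (fun u => f u * exp (-F u))
          (f u * φ u * exp (-F u) + f u * (exp (-F u) * -ψ u)) u :=
        (hf u hu.1).mul (hF u).neg.exp
      rw [hψφ u hu.1] at hd
      convert hd.hasDerivWithinAt using 1
      ring
  have hFt : F t = ∫ s in (0 : ℝ)..t, φ s :=
    intervalIntegral.integral_congr fun s hs => hψφ s (by rw [uIcc_of_le ht] at hs; exact hs.1)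
  have hF0 : F 0 = 0 := intervalIntegral.integral_same
  calc f t = f t * exp (-F t) * exp (F t) := by rw [mul_assoc, ← exp_add]; simp
    _ = f 0 * exp (∫ s in (0 : ℝ)..t, φ s) := by rw [hconst t ⟨ht, le_rfl⟩, hF0, hFt]; simp

theorem eq_mul_exp_of_hasDerivAt_competition {f g : ℝ → ℝ} {τ p q : ℝ}
    (hg : ContinuousOn g (Ici 0))
    (hf : ∀ t, 0 ≤ t → HasDerivAt f (f t * (τ - p * f t - q * g t)) t) {t : ℝ} (ht : 0 ≤ t) :
    f t = f 0 * exp (τ * t - (p * ∫ s in (0 : ℝ)..t, f s) - q * ∫ s in (0 : ℝ)..t, g s) := by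
  have hfc : ContinuousOn f (Ici 0) := fun s hs => (hf s hs).continuousAt.continuousWithinAt
  have hfi := intervalIntegrable_of_continuousOn_Ici hfc ht
  have hgi := intervalIntegrable_of_continuousOn_Ici hg ht
  rw [eq_mul_exp_integral_of_hasDerivAt (by fun_prop) hf ht,
    intervalIntegral.integral_sub (intervalIntegrable_const.sub (hfi.const_mul p))
      (hgi.const_mul q),
    intervalIntegral.integral_sub intervalIntegrable_const (hfi.const_mul p)]
  simp [intervalIntegral.integral_const_mul, mul_comm]

theorem le_of_hasDerivAt_le_logistic {f f' : ℝ → ℝ} {τ a T : ℝ} (ha : 0 < a) (hT : 0 < T)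
    (hpos : ∀ t ∈ Icc 0 T, 0 < f t) (hf : ∀ t ∈ Icc 0 T, HasDerivAt f (f' t) t)
    (hf' : ∀ t ∈ Icc 0 T, f' t ≤ f t * (τ - a * f t)) :
    f T ≤ exp (τ * T + |τ| * T) / (a * T) := by
  set m := a * exp (-(|τ| * T))
  set E : ℝ → ℝ := fun t => exp (τ * t) / f t
  have hE : ∀ t ∈ Icc 0 T, HasDerivAt E
      ((exp (τ * t) * (τ * 1) * f t - exp (τ * t) * f' t) / f t ^ 2) t := fun t ht =>
    ((hasDerivAt_id t).const_mul τ).exp.div (hf t ht) (hpos t ht).ne'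
  have hE' : ∀ t ∈ Icc 0 T, m ≤ (exp (τ * t) * (τ * 1) * f t - exp (τ * t) * f' t) / f t ^ 2 := by
    intro t ht
    have hft := hpos t ht
    have hexp : exp (-(|τ| * T)) ≤ exp (τ * t) :=
      exp_le_exp.2 (abs_le.1 (abs_mul_le_of_mem_Icc τ ht)).1
    rw [le_div_iff₀ (by positivity)]
    nlinarith [hf' t ht, mul_le_mul_of_nonneg_left hexp (mul_nonneg ha.le (sq_nonneg (f t))),
      exp_pos (τ * t)]
  have hET : m * T ≤ E T := by
    refine image_le_of_deriv_right_le_deriv_boundary (f := fun t => m * t) (f' := fun _ => m)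
      (by fun_prop) (fun t _ => ((hasDerivAt_id t).const_mul m).hasDerivWithinAt.congr_deriv
        (mul_one m)) ?_ (fun t ht => (hE t ht).continuousAt.continuousWithinAt)
      (fun t ht => (hE t (Ico_subset_Icc_self ht)).hasDerivWithinAt)
      (fun t ht => hE' t (Ico_subset_Icc_self ht)) ⟨hT.le, le_rfl⟩
    simpa using (div_pos (exp_pos _) (hpos 0 ⟨le_rfl, hT.le⟩)).le
  have hfT := hpos T ⟨hT.le, le_rfl⟩
  calc f T = exp (τ * T) / E T := (div_div_cancel₀ (exp_pos _).ne').symm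
    _ ≤ exp (τ * T) / (m * T) := div_le_div_of_nonneg_left (exp_pos _).le (by positivity) hET
    _ = exp (τ * T + |τ| * T) / (a * T) := by
      rw [exp_add]; simp only [m, exp_neg]; field_simp

def IsLVSolution (τ₁ τ₂ a b c d : ℝ) (x : ℝ → ℝ × ℝ) : Prop :=
  ∀ t, 0 ≤ t → HasDerivAt x (bLV τ₁ τ₂ a b c d (x t)) t

namespace IsLVSolution

variable {τ₁ τ₂ a b c d : ℝ} {x : ℝ → ℝ × ℝ} {t : ℝ}

theorem continuousOn (hx : IsLVSolution τ₁ τ₂ a b c d x) : ContinuousOn x (Ici 0) :=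
  fun t ht => (hx t ht).continuousAt.continuousWithinAt

theorem hasDerivAt_fst (hx : IsLVSolution τ₁ τ₂ a b c d x) (ht : 0 ≤ t) :
    HasDerivAt (fun t => (x t).1) ((x t).1 * (τ₁ - a * (x t).1 - c * (x t).2)) t :=
  (hasFDerivAt_fst (𝕜 := ℝ) (p := x t)).comp_hasDerivAt t (hx t ht)

theorem hasDerivAt_snd (hx : IsLVSolution τ₁ τ₂ a b c d x) (ht : 0 ≤ t) :
    HasDerivAt (fun t => (x t).2) ((x t).2 * (τ₂ - b * (x t).2 - d * (x t).1)) t :=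
  (hasFDerivAt_snd (𝕜 := ℝ) (p := x t)).comp_hasDerivAt t (hx t ht)

theorem fst_eq (hx : IsLVSolution τ₁ τ₂ a b c d x) (ht : 0 ≤ t) :
    (x t).1 = (x 0).1 * exp (τ₁ * t - (a * ∫ s in (0 : ℝ)..t, (x s).1)
      - c * ∫ s in (0 : ℝ)..t, (x s).2) :=
  eq_mul_exp_of_hasDerivAt_competition (continuous_snd.comp_continuousOn hx.continuousOn)
    (fun _ hs => hx.hasDerivAt_fst hs) ht

theorem snd_eq (hx : IsLVSolution τ₁ τ₂ a b c d x) (ht : 0 ≤ t) :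
    (x t).2 = (x 0).2 * exp (τ₂ * t - (b * ∫ s in (0 : ℝ)..t, (x s).2)
      - d * ∫ s in (0 : ℝ)..t, (x s).1) :=
  eq_mul_exp_of_hasDerivAt_competition (continuous_fst.comp_continuousOn hx.continuousOn)
    (fun _ hs => hx.hasDerivAt_snd hs) ht

theorem fst_pos (hx : IsLVSolution τ₁ τ₂ a b c d x) (h0 : 0 < (x 0).1) (ht : 0 ≤ t) :
    0 < (x t).1 := by
  rw [hx.fst_eq ht]; positivity

theorem snd_pos (hx : IsLVSolution τ₁ τ₂ a b c d x) (h0 : 0 < (x 0).2) (ht : 0 ≤ t) :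
    0 < (x t).2 := by
  rw [hx.snd_eq ht]; positivity

theorem log_fst_eq (hx : IsLVSolution τ₁ τ₂ a b c d x) (h0 : 0 < (x 0).1) (ht : 0 ≤ t) :
    log (x t).1 = log (x 0).1 + τ₁ * t - (a * ∫ s in (0 : ℝ)..t, (x s).1)
      - c * ∫ s in (0 : ℝ)..t, (x s).2 := by
  rw [hx.fst_eq ht, log_mul h0.ne' (exp_pos _).ne', log_exp]; ring

theorem log_snd_eq (hx : IsLVSolution τ₁ τ₂ a b c d x) (h0 : 0 < (x 0).2) (ht : 0 ≤ t) :
    log (x t).2 = log (x 0).2 + τ₂ * t - (b * ∫ s in (0 : ℝ)..t, (x s).2)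
      - d * ∫ s in (0 : ℝ)..t, (x s).1 := by
  rw [hx.snd_eq ht, log_mul h0.ne' (exp_pos _).ne', log_exp]; ring

theorem fst_le (hx : IsLVSolution τ₁ τ₂ a b c d x) (ha : 0 < a) (hc : 0 ≤ c)
    (h0 : 0 < (x 0).1 ∧ 0 < (x 0).2) {T : ℝ} (hT : 0 < T) :
    (x T).1 ≤ exp (τ₁ * T + |τ₁| * T) / (a * T) :=
  le_of_hasDerivAt_le_logistic ha hT (fun _ ht => hx.fst_pos h0.1 ht.1)
    (fun _ ht => hx.hasDerivAt_fst ht.1) fun t ht => by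
      nlinarith [hx.fst_pos h0.1 ht.1, mul_nonneg hc (hx.snd_pos h0.2 ht.1).le]

theorem log_fst_sub_log_snd (hx : IsLVSolution τ₁ τ₂ a b c d x)
    (h0 : 0 < (x 0).1 ∧ 0 < (x 0).2) (ht : 0 ≤ t) :
    log (x t).1 - log (x t).2 = log (x 0).1 - log (x 0).2 + (τ₁ - τ₂) * t
      + ((b - c) * (∫ s in (0 : ℝ)..t, (x s).2) + (d - a) * ∫ s in (0 : ℝ)..t, (x s).1) := by
  rw [hx.log_fst_eq h0.1 ht, hx.log_snd_eq h0.2 ht]; ring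

/- On `[0, t]` the potential `(b - c) B + (d - a) A` stays in `[0, K]`, which pins `x₁ / x₂`
between `exp (D - M)` and `exp (D + M + K)`, where `D` is the initial log-ratio and
`M = |τ₁ - τ₂| T`. -/
theorem integral_le_of_potential_le (hx : IsLVSolution τ₁ τ₂ a b c d x)
    (h0 : 0 < (x 0).1 ∧ 0 < (x 0).2)
    (ha : 0 ≤ a) (hc : 0 ≤ c) (hcb : c ≤ b) (had : a ≤ d) (hne : c < b ∨ a < d)
    {T K : ℝ} (ht : t ∈ Icc 0 T)
    (hK : (b - c) * (∫ s in (0 : ℝ)..t, (x s).2) + (d - a) * ∫ s in (0 : ℝ)..t, (x s).1 ≤ K) :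
    a * (∫ s in (0 : ℝ)..t, (x s).1) + c * ∫ s in (0 : ℝ)..t, (x s).2 ≤
      (a * exp (log (x 0).1 - log (x 0).2 + |τ₁ - τ₂| * T + K) + c) *
        (K / (b - c + (d - a) * exp (log (x 0).1 - log (x 0).2 - |τ₁ - τ₂| * T))) := by
  set D := log (x 0).1 - log (x 0).2
  set M := |τ₁ - τ₂| * T
  set A := fun t => ∫ s in (0 : ℝ)..t, (x s).1
  set B := fun t => ∫ s in (0 : ℝ)..t, (x s).2
  have hAmono := monotoneOn_integral_of_nonneg (continuous_fst.comp_continuousOn hx.continuousOn)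
    fun _ hs => (hx.fst_pos h0.1 hs).le
  have hBmono := monotoneOn_integral_of_nonneg (continuous_snd.comp_continuousOn hx.continuousOn)
    fun _ hs => (hx.snd_pos h0.2 hs).le
  have hAi := intervalIntegrable_of_continuousOn_Ici
    (continuous_fst.comp_continuousOn hx.continuousOn) ht.1
  have hBi := intervalIntegrable_of_continuousOn_Ici
    (continuous_snd.comp_continuousOn hx.continuousOn) ht.1
  have hratio : ∀ s ∈ Icc 0 t,
      exp (D - M) * (x s).2 ≤ (x s).1 ∧ (x s).1 ≤ exp (D + M + K) * (x s).2 := by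
    intro s hs
    have hA0 : 0 ≤ A s := by simpa [A] using hAmono self_mem_Ici hs.1 hs.1
    have hB0 : 0 ≤ B s := by simpa [B] using hBmono self_mem_Ici hs.1 hs.1
    have hAs : A s ≤ A t := hAmono hs.1 (hs.1.trans hs.2) hs.2
    have hBs : B s ≤ B t := hBmono hs.1 (hs.1.trans hs.2) hs.2
    have hτ := abs_mul_le_of_mem_Icc (τ₁ - τ₂) ⟨hs.1, hs.2.trans ht.2⟩
    have hlog := hx.log_fst_sub_log_snd h0 hs.1
    have h1 := hx.fst_pos h0.1 hs.1
    have h2 := hx.snd_pos h0.2 hs.1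
    have hq : (x s).1 = exp (log (x s).1 - log (x s).2) * (x s).2 := by
      rw [exp_sub, exp_log h1, exp_log h2, div_mul_cancel₀ _ h2.ne']
    rw [hq]
    constructor <;> refine mul_le_mul_of_nonneg_right (exp_le_exp.2 ?_) h2.le <;>
      nlinarith [abs_le.1 hτ, sub_nonneg.2 hcb, sub_nonneg.2 had]
  have hlow : exp (D - M) * B t ≤ A t := by
    simp only [A, B]
    rw [← intervalIntegral.integral_const_mul]
    exact intervalIntegral.integral_mono_on ht.1 (hBi.const_mul _) hAi fun s hs => (hratio s hs).1
  have hup : A t ≤ exp (D + M + K) * B t := by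
    simp only [A, B]
    rw [← intervalIntegral.integral_const_mul]
    exact intervalIntegral.integral_mono_on ht.1 hAi (hBi.const_mul _) fun s hs => (hratio s hs).2
  have hden : 0 < b - c + (d - a) * exp (D - M) := by
    rcases hne with h | h <;> nlinarith [exp_pos (D - M)]
  have hB : B t ≤ K / (b - c + (d - a) * exp (D - M)) := by
    rw [le_div_iff₀ hden]; nlinarith
  calc a * A t + c * B t ≤ (a * exp (D + M + K) + c) * B t := by nlinarith
    _ ≤ _ := mul_le_mul_of_nonneg_left hB (by positivity)

end IsLVSolution

theorem exitT_le_and_eq {X : ℝ → ℝ → ℝ × ℝ} {ε r T : ℝ} (hT : 0 ≤ T) (hT2 : (X r T).2 ≤ ε)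
    (hlower : ∀ t ∈ Icc 0 T, ε < (X r t).2 → ε < (X r t).1) :
    exitT X ε r ≤ ENNReal.ofReal T ∧
      exitT X ε r = sInf (ENNReal.ofReal '' {t : ℝ | 0 ≤ t ∧ (X r t).2 ≤ ε}) := by
  have hTmem : T ∈ {t : ℝ | 0 ≤ t ∧ (X r t).2 ≤ ε} := ⟨hT, hT2⟩
  have heq : exitT X ε r = sInf (ENNReal.ofReal '' {t : ℝ | 0 ≤ t ∧ (X r t).2 ≤ ε}) := by
    refine le_antisymm (sInf_le_sInf (image_mono fun t ht => ⟨ht.1, fun h => h.2.not_ge ht.2⟩))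
      (le_sInf ?_)
    rintro _ ⟨t, ⟨ht0, hexit⟩, rfl⟩
    by_cases h2 : (X r t).2 ≤ ε
    · exact sInf_le (mem_image_of_mem _ ⟨ht0, h2⟩)
    rcases le_or_gt t T with htT | hTt
    · exact absurd ⟨hlower t ⟨ht0, htT⟩ (not_le.1 h2), not_le.1 h2⟩ hexit
    · exact (sInf_le (mem_image_of_mem _ hTmem)).trans (ofReal_le_ofReal hTt.le)
  exact ⟨heq ▸ sInf_le (mem_image_of_mem _ hTmem), heq⟩

theorem eventually_lt_fst_of_lt_snd {τ₁ τ₂ a b c d : ℝ} {x₀ : ℝ × ℝ} {X : ℝ → ℝ → ℝ × ℝ}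
    (hx₀ : 0 < x₀.1 ∧ 0 < x₀.2)
    (hX0 : ∀ r : ℝ, 0 < r → X r 0 = (r * x₀.1, r * x₀.2))
    (hX : ∀ r : ℝ, 0 < r → IsLVSolution τ₁ τ₂ a b c d (X r))
    (ha : 0 ≤ a) (hc : 0 ≤ c) (hcb : c ≤ b) (had : a ≤ d) (hne : c < b ∨ a < d)
    {ε η T : ℝ} (hε : 0 < ε) (hη : 0 < η) :
    ∀ᶠ r in atTop, ∀ t ∈ Icc 0 T, ε < (X r t).2 → η < (X r t).1 := by
  set D := log x₀.1 - log x₀.2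
  set M := |τ₁ - τ₂| * T
  set K := log η - log ε - D + M
  set C := (a * exp (D + M + K) + c) * (K / (b - c + (d - a) * exp (D - M)))
  filter_upwards [eventually_gt_atTop 0,
    tendsto_log_atTop.eventually_gt_atTop (log η - log x₀.1 + |τ₁| * T + C)]
    with r hr hlogr t ht hεt
  have hx := hX r hr
  have h0 : 0 < (X r 0).1 ∧ 0 < (X r 0).2 := by
    rw [hX0 r hr]; exact ⟨mul_pos hr hx₀.1, mul_pos hr hx₀.2⟩
  have hlog0 : log (X r 0).1 = log r + log x₀.1 ∧ log (X r 0).2 = log r + log x₀.2 := by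
    rw [hX0 r hr]; exact ⟨log_mul hr.ne' hx₀.1.ne', log_mul hr.ne' hx₀.2.ne'⟩
  rw [← log_lt_log_iff hη (hx.fst_pos h0.1 ht.1)]
  have hεt' := log_lt_log hε hεt
  by_cases hK : K ≤ (b - c) * (∫ s in (0 : ℝ)..t, (X r s).2)
      + (d - a) * ∫ s in (0 : ℝ)..t, (X r s).1
  · have hratio := hx.log_fst_sub_log_snd h0 ht.1
    linarith [abs_le.1 (abs_mul_le_of_mem_Icc (τ₁ - τ₂) ht)]
  · have hbound := hx.integral_le_of_potential_le h0 ha hc hcb had hne ht (not_le.1 hK).le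
    rw [hlog0.1, hlog0.2, add_sub_add_left_eq_sub] at hbound
    have hfst := hx.log_fst_eq h0.1 ht.1
    linarith [abs_le.1 (abs_mul_le_of_mem_Icc τ₁ ht)]

theorem stmt9_general (τ₁ τ₂ a b c d : ℝ) (ha : 0 < a) (hc : 0 < c)
    (hcase : (c < b ∧ a ≤ d) ∨ (c ≤ b ∧ a < d))
    (x₀ : ℝ × ℝ) (hx₀ : 0 < x₀.1 ∧ 0 < x₀.2)
    (X : ℝ → ℝ → ℝ × ℝ)
    (hX0 : ∀ r : ℝ, 0 < r → X r 0 = (r * x₀.1, r * x₀.2))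
    (hXder : ∀ r : ℝ, 0 < r → ∀ t : ℝ, 0 ≤ t →
      HasDerivAt (X r) (bLV τ₁ τ₂ a b c d (X r t)) t)
    (ε T : ℝ) (hε : 0 < ε) (hT : 0 < T) :
    ∃ r₀ : ℝ, ∀ r : ℝ, r₀ ≤ r →
      exitT X ε r ≤ ENNReal.ofReal T ∧
      exitT X ε r = sInf (ENNReal.ofReal '' {t : ℝ | 0 ≤ t ∧ (X r t).2 ≤ ε}) := by
  have hcb : c ≤ b := hcase.elim (fun h => h.1.le) (fun h => h.1)
  have had : a ≤ d := hcase.elim (fun h => h.2) (fun h => h.2.le)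
  have hne : c < b ∨ a < d := hcase.imp And.left And.right
  set K := exp (τ₁ * T + |τ₁| * T) / (a * T)
  have hlower := eventually_lt_fst_of_lt_snd hx₀ hX0 hXder ha.le hc.le hcb had hne (T := T) hε
    (lt_max_of_lt_left hε : 0 < max ε K)
  obtain ⟨r₀, hr₀⟩ := eventually_atTop.1 (hlower.and (eventually_gt_atTop 0))
  refine ⟨r₀, fun r hr => ?_⟩
  obtain ⟨hlower, hr⟩ := hr₀ r hr
  have h0 : 0 < (X r 0).1 ∧ 0 < (X r 0).2 := by
    rw [hX0 r hr]; exact ⟨mul_pos hr hx₀.1, mul_pos hr hx₀.2⟩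
  have hT2 : (X r T).2 ≤ ε := not_lt.1 fun h =>
    (IsLVSolution.fst_le (hXder r hr) ha hc.le h0 hT).not_gt
      ((le_max_right ε K).trans_lt (hlower T ⟨hT.le, le_rfl⟩ h))
  exact exitT_le_and_eq hT.le hT2 fun t ht h => (le_max_left ε K).trans_lt (hlower t ht h)

/-- When `(b > c and a ≤ d)` or `(b ≥ c and a < d)`, for large `r` the flow
started from `r·x₀` exits `𝒟_ε` before time `T`, through its lower boundary. -/
theorem stmt9 (τ₁ τ₂ a b c d : ℝ) (ha : 0 < a) (hb : 0 < b) (hc : 0 < c) (hd : 0 < d)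
    (hcase : (c < b ∧ a ≤ d) ∨ (c ≤ b ∧ a < d))
    (x₀ : ℝ × ℝ) (hx₀ : 0 < x₀.1 ∧ 0 < x₀.2)
    (X : ℝ → ℝ → ℝ × ℝ)
    (hX0 : ∀ r : ℝ, 0 < r → X r 0 = (r * x₀.1, r * x₀.2))
    (hXmem : ∀ r : ℝ, 0 < r → ∀ t : ℝ, 0 ≤ t → 0 ≤ (X r t).1 ∧ 0 ≤ (X r t).2)
    (hXder : ∀ r : ℝ, 0 < r → ∀ t : ℝ, 0 ≤ t →
      HasDerivAt (X r) (bLV τ₁ τ₂ a b c d (X r t)) t)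
    (ε T : ℝ) (hε : 0 < ε) (hT : 0 < T) :
    ∃ r₀ : ℝ, ∀ r : ℝ, r₀ ≤ r →
      exitT X ε r ≤ ENNReal.ofReal T ∧
      exitT X ε r = sInf (ENNReal.ofReal '' {t : ℝ | 0 ≤ t ∧ (X r t).2 ≤ ε}) :=
  stmt9_general τ₁ τ₂ a b c d ha hc hcase x₀ hx₀ X hX0 hXder ε T hε hT
end

section
/- Assume either (a > d > 0 and b > c > 0), or (a, b > 0 and c = d = 0), or (a = d > 0 and b = c > 0). For α > 0 let T_{𝔇_α}(x₀) = inf{ t ≥ 0 : φ(x₀,t) ∉ 𝔇_α } be the exit time of the flow from 𝔇_α. Then for every α₀ > 0, inf_{x₀ ∈ 𝔇_{α₀}} T_{𝔇_α}(x₀) → +∞ as α → 0+; i.e. for every M > 0 there exists α₁ ∈ (0,α₀) such that for all α ∈ (0,α₁] and all x₀ ∈ 𝔇_{α₀}, T_{𝔇_α}(x₀) ≥ M. -/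
/-!
Every estimate is a comparison with `m e^{-Kt}` for a quantity `f` with `f' = f g`, valid as long
as `g > -K` wherever `f ≤ m`. Applied to a coordinate, with `K` bounding its continuous per-capita
rate on `[0, T]`, it keeps the coordinate positive. Applied to the ratio `x / y`, whose per-capita
rate is `τ₁ - τ₂ - (a - d) x + (b - c) y`, it gives `x / y ≥ ρ e^{-Lt}` for any `ρ` with
`(a - d) ρ ≤ b - c`; the parameter conditions are what make one `ρ < α₀` work for both
ratios.
Once both ratios exceed some `r > 0` on `[0, T]`, the per-capita rate of `x` is at least
`τ₁ - a - c / r` while `x ≤ 1`, which bounds the coordinates below by a constant depending only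
on `α₀` and `T`.
-/

open Real Set Filter ENNReal

/-- The cone-like domain `𝔇_α = { x ∈ (α,∞)² : x₁ ≥ α x₂, x₂ ≥ α x₁ }`. -/
def Dfrak (α : ℝ) : Set (ℝ × ℝ) :=
  {x | α < x.1 ∧ α < x.2 ∧ α * x.2 ≤ x.1 ∧ α * x.1 ≤ x.2}

/-- Exit time of the flow `t ↦ Φ x₀ t` from `𝔇_α`
(with values in `ℝ≥0∞`, `inf ∅ = ∞`). -/
noncomputable def exitD (Φ : ℝ × ℝ → ℝ → ℝ × ℝ) (α : ℝ) (x₀ : ℝ × ℝ) : ℝ≥0∞ :=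
  sInf (ENNReal.ofReal '' {t : ℝ | 0 ≤ t ∧ Φ x₀ t ∉ Dfrak α})

theorem Dfrak_subset_Dfrak {α β : ℝ} (hβ : 0 ≤ β) (hβα : β ≤ α) : Dfrak α ⊆ Dfrak β := by
  rintro ⟨p, q⟩ ⟨hp, hq, hpq, hqp⟩
  exact ⟨by linarith, by linarith, by nlinarith, by nlinarith⟩

theorem ofReal_le_exitD {Φ : ℝ × ℝ → ℝ → ℝ × ℝ} {α M : ℝ} {x₀ : ℝ × ℝ}
    (h : ∀ t ∈ Ico 0 M, Φ x₀ t ∈ Dfrak α) : ENNReal.ofReal M ≤ exitD Φ α x₀ := by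
  refine le_sInf ?_
  rintro _ ⟨t, ⟨ht, hnot⟩, rfl⟩
  exact ENNReal.ofReal_le_ofReal (not_lt.mp fun htM => hnot (h t ⟨ht, htM⟩))

theorem hasDerivAt_fst_snd_of_bLV {τ₁ τ₂ a b c d t : ℝ} {φ : ℝ → ℝ × ℝ}
    (h : HasDerivAt φ (bLV τ₁ τ₂ a b c d (φ t)) t) :
    HasDerivAt (fun s => (φ s).1) ((φ t).1 * (τ₁ - a * (φ t).1 - c * (φ t).2)) t ∧
      HasDerivAt (fun s => (φ s).2) ((φ t).2 * (τ₂ - b * (φ t).2 - d * (φ t).1)) t :=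
  ⟨hasFDerivAt_fst.comp_hasDerivAt (f := φ) t h, hasFDerivAt_snd.comp_hasDerivAt (f := φ) t h⟩

theorem mul_exp_le_of_hasDerivAt_mul {f g : ℝ → ℝ} {T m K : ℝ} (hm : 0 < m) (hK : 0 ≤ K)
    (hf : ∀ t ∈ Icc 0 T, HasDerivAt f (f t * g t) t)
    (hg : ∀ t ∈ Ico 0 T, f t ≤ m → -K < g t) (h0 : m ≤ f 0) :
    ∀ t ∈ Icc 0 T, m * exp (-(K * t)) ≤ f t := by
  have hB : ∀ t, HasDerivAt (fun s => m * exp (-(K * s))) (m * exp (-(K * t)) * -K) t := by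
    intro t
    have hE : HasDerivAt (fun s => -(K * s)) (-K) t := by
      simpa using ((hasDerivAt_id t).const_mul K).fun_neg
    simpa [mul_assoc] using hE.exp.const_mul m
  refine image_le_of_deriv_right_lt_deriv_boundary' (by fun_prop)
    (fun s _ => (hB s).hasDerivWithinAt) (by simpa using h0)
    (fun s hs => (hf s hs).continuousAt.continuousWithinAt)
    (fun s hs => (hf s (Ico_subset_Icc_self hs)).hasDerivWithinAt) fun s hs hBs => ?_
  have hle : f s ≤ m := by
    rw [← hBs]
    exact mul_le_of_le_one_right hm.le (exp_le_one_iff.mpr (by nlinarith [hs.1]))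
  rw [hBs]
  exact mul_lt_mul_of_pos_left (hg s hs hle) (hBs ▸ by positivity)

theorem pos_of_hasDerivAt_mul {f g : ℝ → ℝ} {T : ℝ}
    (hf : ∀ t ∈ Icc 0 T, HasDerivAt f (f t * g t) t) (hg : ContinuousOn g (Icc 0 T))
    (h0 : 0 < f 0) : ∀ t ∈ Icc 0 T, 0 < f t := by
  obtain ⟨k, hk⟩ := isCompact_Icc.bddBelow_image hg
  intro t ht
  have hK : ∀ s ∈ Ico 0 T, f s ≤ f 0 → -(|k| + 1) < g s := fun s hs _ => by
    linarith [neg_abs_le k, hk (mem_image_of_mem g (Ico_subset_Icc_self hs))]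
  calc 0 < f 0 * exp (-((|k| + 1) * t)) := by positivity
    _ ≤ f t := mul_exp_le_of_hasDerivAt_mul h0 (by positivity) hf hK le_rfl t ht

theorem exists_mem_Ioo_mul_le_and_mul_le {A B α₀ : ℝ} (hα₀ : 0 < α₀)
    (h : (0 < A ∧ 0 < B) ∨ (A = 0 ∧ B = 0)) :
    ∃ ρ ∈ Ioo 0 α₀, A * ρ ≤ B ∧ B * ρ ≤ A := by
  rcases h with ⟨hA, hB⟩ | ⟨rfl, rfl⟩
  · refine ⟨min (α₀ / 2) (min (B / A) (A / B)), ⟨by positivity, by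
      linarith [min_le_left (α₀ / 2) (min (B / A) (A / B))]⟩, ?_, ?_⟩
    · calc A * _ ≤ A * (B / A) := by gcongr; exact (min_le_right _ _).trans (min_le_left _ _)
        _ = B := by field_simp
    · calc B * _ ≤ B * (A / B) := by gcongr; exact (min_le_right _ _).trans (min_le_right _ _)
        _ = A := by field_simp
  · exact ⟨α₀ / 2, ⟨by positivity, by linarith⟩, by simp, by simp⟩

namespace LotkaVolterra

variable {τ₁ τ₂ a b c d T : ℝ} {x y : ℝ → ℝ}

theorem pos (hx : ∀ t ∈ Icc 0 T, HasDerivAt x (x t * (τ₁ - a * x t - c * y t)) t)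
    (hy : ∀ t ∈ Icc 0 T, HasDerivAt y (y t * (τ₂ - b * y t - d * x t)) t) (hx0 : 0 < x 0) :
    ∀ t ∈ Icc 0 T, 0 < x t := by
  have hxc : ContinuousOn x (Icc 0 T) := fun t ht => (hx t ht).continuousAt.continuousWithinAt
  have hyc : ContinuousOn y (Icc 0 T) := fun t ht => (hy t ht).continuousAt.continuousWithinAt
  exact pos_of_hasDerivAt_mul hx (by fun_prop) hx0

theorem mul_exp_mul_le {ρ L : ℝ}
    (hx : ∀ t ∈ Icc 0 T, HasDerivAt x (x t * (τ₁ - a * x t - c * y t)) t)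
    (hy : ∀ t ∈ Icc 0 T, HasDerivAt y (y t * (τ₂ - b * y t - d * x t)) t)
    (hy0 : 0 < y 0) (hρ : 0 < ρ) (had : 0 ≤ a - d) (hρad : (a - d) * ρ ≤ b - c)
    (hL : 0 ≤ L) (hτL : τ₂ - τ₁ < L) (h0 : ρ * y 0 ≤ x 0) :
    ∀ t ∈ Icc 0 T, ρ * exp (-(L * t)) * y t ≤ x t := by
  have hypos := pos hy hx hy0
  have hz : ∀ t ∈ Icc 0 T, HasDerivAt (x / y)
      ((x / y) t * (τ₁ - τ₂ - (a - d) * x t + (b - c) * y t)) t := by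
    intro t ht
    refine ((hx t ht).div (hy t ht) (hypos t ht).ne').congr_deriv ?_
    have := (hypos t ht).ne'
    simp only [Pi.div_apply]
    field_simp
    ring
  have hg : ∀ s ∈ Ico 0 T, (x / y) s ≤ ρ →
      -L < τ₁ - τ₂ - (a - d) * x s + (b - c) * y s := by
    intro s hs hle
    have hys := hypos s (Ico_subset_Icc_self hs)
    rw [Pi.div_apply, div_le_iff₀ hys] at hle
    nlinarith [mul_le_mul_of_nonneg_left hle had]
  intro t ht
  have := mul_exp_le_of_hasDerivAt_mul hρ hL hz hg (by rwa [Pi.div_apply, le_div_iff₀ hy0]) t ht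
  rwa [Pi.div_apply, le_div_iff₀ (hypos t ht)] at this

theorem mul_exp_le {m r K : ℝ}
    (hx : ∀ t ∈ Icc 0 T, HasDerivAt x (x t * (τ₁ - a * x t - c * y t)) t)
    (hm : 0 < m) (hm1 : m ≤ 1) (hx0 : m ≤ x 0) (ha : 0 ≤ a) (hc : 0 ≤ c) (hr : 0 < r)
    (hxy : ∀ t ∈ Icc 0 T, r * y t ≤ x t) (hK : 0 ≤ K) (hτK : -K < τ₁ - a - c / r) :
    ∀ t ∈ Icc 0 T, m * exp (-(K * t)) ≤ x t := by
  refine mul_exp_le_of_hasDerivAt_mul hm hK hx (fun s hs hle => ?_) hx0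
  have hys : y s ≤ 1 / r := by
    rw [le_div_iff₀ hr]
    linarith [hxy s (Ico_subset_Icc_self hs)]
  have : c * y s ≤ c / r := by
    simpa [div_eq_mul_one_div c r] using mul_le_mul_of_nonneg_left hys hc
  nlinarith

theorem exists_forall_mem_Dfrak {α₀ : ℝ} (hc : 0 ≤ c) (hd : 0 ≤ d)
    (hAB : (0 < a - d ∧ 0 < b - c) ∨ (a - d = 0 ∧ b - c = 0)) (hα₀ : 0 < α₀)
    (hT : 0 ≤ T) :
    ∃ α₁ ∈ Ioo 0 α₀, ∀ x y : ℝ → ℝ,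
      (∀ t ∈ Icc 0 T, HasDerivAt x (x t * (τ₁ - a * x t - c * y t)) t) →
      (∀ t ∈ Icc 0 T, HasDerivAt y (y t * (τ₂ - b * y t - d * x t)) t) →
      (x 0, y 0) ∈ Dfrak α₀ → ∀ t ∈ Icc 0 T, (x t, y t) ∈ Dfrak α₁ := by
  obtain ⟨ρ, ⟨hρ, hρα₀⟩, hρad, hρbc⟩ := exists_mem_Ioo_mul_le_and_mul_le hα₀ hAB
  have had : 0 ≤ a - d := by rcases hAB with h | h <;> linarith [h.1]
  have hbc : 0 ≤ b - c := by rcases hAB with h | h <;> linarith [h.2]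
  have ha : 0 ≤ a := by linarith
  have hb : 0 ≤ b := by linarith
  set L := |τ₁ - τ₂| + 1
  set r := ρ * exp (-(L * T))
  set K := |τ₁| + |τ₂| + a + b + (c + d) / r + 1
  set m := min α₀ 1
  have hL : 0 ≤ L := by positivity
  have hK : 0 ≤ K := by positivity
  have hr : 0 < r := by positivity
  have hrρ : r ≤ ρ := mul_le_of_le_one_right hρ.le (exp_le_one_iff.mpr (by nlinarith))
  have hr_le : ∀ s ∈ Icc 0 T, r ≤ ρ * exp (-(L * s)) := fun s hs => by
    gcongr ρ * exp (-(L * ?_)); exact hs.2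
  have hm : 0 < m := by positivity
  have hmα₀ : m ≤ α₀ := min_le_left _ _
  set α₁ := min (m * exp (-(K * T))) r / 2 with hα₁
  have hα₁m : α₁ < m * exp (-(K * T)) := by
    linarith [min_le_left (m * exp (-(K * T))) r, mul_pos hm (exp_pos (-(K * T)))]
  have hα₁r : α₁ ≤ r := by linarith [min_le_right (m * exp (-(K * T))) r]
  refine ⟨α₁, ⟨by positivity, by linarith⟩, ?_⟩
  rintro x y hx hy ⟨hx0, hy0, hxy0, hyx0⟩ t ht
  have hxpos := pos hx hy (hα₀.trans hx0)
  have hypos := pos hy hx (hα₀.trans hy0)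
  have hxy : ∀ s ∈ Icc 0 T, r * y s ≤ x s := fun s hs => by
    have := mul_exp_mul_le hx hy (hα₀.trans hy0) hρ had hρad hL
      (by linarith [neg_abs_le (τ₁ - τ₂)]) (by nlinarith) s hs
    nlinarith [hr_le s hs, hypos s hs]
  have hyx : ∀ s ∈ Icc 0 T, r * x s ≤ y s := fun s hs => by
    have := mul_exp_mul_le hy hx (hα₀.trans hx0) hρ hbc hρbc hL
      (by linarith [le_abs_self (τ₁ - τ₂)]) (by nlinarith) s hs
    nlinarith [hr_le s hs, hxpos s hs]
  have hxlow := mul_exp_le hx hm (min_le_right _ _) (by linarith) ha hc hr hxy hK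
    (by linarith [neg_abs_le τ₁, abs_nonneg τ₂, add_div c d r, div_nonneg hd hr.le]) t ht
  have hylow := mul_exp_le hy hm (min_le_right _ _) (by linarith) hb hd hr hyx hK
    (by linarith [neg_abs_le τ₂, abs_nonneg τ₁, add_div c d r, div_nonneg hc hr.le]) t ht
  have hexp : m * exp (-(K * T)) ≤ m * exp (-(K * t)) := by gcongr; exact ht.2
  refine ⟨by linarith, by linarith, ?_, ?_⟩
  · nlinarith [hxy t ht, hypos t ht]
  · nlinarith [hyx t ht, hxpos t ht]

end LotkaVolterra

theorem stmt10_general (τ₁ τ₂ a b c d : ℝ)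
    (hcase : (d < a ∧ 0 < d ∧ c < b ∧ 0 < c) ∨
             (0 < a ∧ 0 < b ∧ c = 0 ∧ d = 0) ∨
             (a = d ∧ 0 < d ∧ b = c ∧ 0 < c))
    (Φ : ℝ × ℝ → ℝ → ℝ × ℝ)
    (hΦ0 : ∀ x₀ : ℝ × ℝ, 0 ≤ x₀.1 → 0 ≤ x₀.2 → Φ x₀ 0 = x₀)
    (hΦder : ∀ x₀ : ℝ × ℝ, 0 ≤ x₀.1 → 0 ≤ x₀.2 → ∀ t : ℝ, 0 ≤ t →
      HasDerivAt (Φ x₀) (bLV τ₁ τ₂ a b c d (Φ x₀ t)) t) :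
    ∀ α₀ > 0, ∀ M > 0, ∃ α₁ ∈ Set.Ioo 0 α₀, ∀ α ∈ Set.Ioc (0 : ℝ) α₁,
      ∀ x₀ ∈ Dfrak α₀, ENNReal.ofReal M ≤ exitD Φ α x₀ := by
  have hc : 0 ≤ c := by rcases hcase with h | h | h <;> linarith [h.2.2.1]
  have hd : 0 ≤ d := by rcases hcase with h | h | h <;> linarith [h.2.1]
  have hAB : (0 < a - d ∧ 0 < b - c) ∨ (a - d = 0 ∧ b - c = 0) := by
    rcases hcase with h | h | h
    · exact .inl ⟨by linarith, by linarith⟩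
    · exact .inl ⟨by linarith, by linarith⟩
    · exact .inr ⟨by linarith, by linarith⟩
  intro α₀ hα₀ M hM
  obtain ⟨α₁, hα₁, hmem⟩ :=
    LotkaVolterra.exists_forall_mem_Dfrak (τ₁ := τ₁) (τ₂ := τ₂) hc hd hAB hα₀ hM.le
  refine ⟨α₁, hα₁, fun α hα x₀ hx₀ => ofReal_le_exitD fun t ht => ?_⟩
  have hx₀1 : 0 ≤ x₀.1 := by linarith [hx₀.1]
  have hx₀2 : 0 ≤ x₀.2 := by linarith [hx₀.2.1]
  have hderiv := fun s (hs : s ∈ Icc 0 M) =>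
    hasDerivAt_fst_snd_of_bLV (hΦder x₀ hx₀1 hx₀2 s hs.1)
  refine Dfrak_subset_Dfrak hα.1.le hα.2 (hmem _ _ (fun s hs => (hderiv s hs).1)
    (fun s hs => (hderiv s hs).2) ?_ t (Ico_subset_Icc_self ht))
  rwa [hΦ0 x₀ hx₀1 hx₀2]

/-- Under the parameter condition, the exit time from `𝔇_α` of the flow started
anywhere in `𝔇_{α₀}` tends to `+∞`, uniformly, as `α → 0+`. -/
theorem stmt10 (τ₁ τ₂ a b c d : ℝ)
    (hcase : (d < a ∧ 0 < d ∧ c < b ∧ 0 < c) ∨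
             (0 < a ∧ 0 < b ∧ c = 0 ∧ d = 0) ∨
             (a = d ∧ 0 < d ∧ b = c ∧ 0 < c))
    (Φ : ℝ × ℝ → ℝ → ℝ × ℝ)
    (hΦ0 : ∀ x₀ : ℝ × ℝ, 0 ≤ x₀.1 → 0 ≤ x₀.2 → Φ x₀ 0 = x₀)
    (hΦmem : ∀ x₀ : ℝ × ℝ, 0 ≤ x₀.1 → 0 ≤ x₀.2 → ∀ t : ℝ, 0 ≤ t →
      0 ≤ (Φ x₀ t).1 ∧ 0 ≤ (Φ x₀ t).2)
    (hΦder : ∀ x₀ : ℝ × ℝ, 0 ≤ x₀.1 → 0 ≤ x₀.2 → ∀ t : ℝ, 0 ≤ t →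
      HasDerivAt (Φ x₀) (bLV τ₁ τ₂ a b c d (Φ x₀ t)) t) :
    ∀ α₀ > 0, ∀ M > 0, ∃ α₁ ∈ Set.Ioo 0 α₀, ∀ α ∈ Set.Ioc (0 : ℝ) α₁,
      ∀ x₀ ∈ Dfrak α₀, ENNReal.ofReal M ≤ exitD Φ α x₀ :=
  stmt10_general τ₁ τ₂ a b c d hcase Φ hΦ0 hΦder
end
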